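/- arXiv:2409.18209 — 9 statements merged into one kernel-verified Lean document; each statement's English description precedes it below -/
import Mathlib

section
/- For the asymmetric power generator f_α(ρ) = (ρ^α - 1)/(α(α-1)) with α ∉ {0,1}, applying the f_α-NCE objective to the α-centered model yields L_α^cent(θ) = (1/(1-α)) E_{q_d}[ρ_θ^{α-1}] (E_{q_n}[ρ_θ^α])^{(1-α)/α} up to an additive constant, where ρ_θ = φ_θ/q_n; in particular E_{q_n}[ρ̃_{θ;α}^α] = 1 for the centered ratio ρ̃_{θ;α} = φ̃_{θ;α}/q_n. -/
open MeasureTheory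

/-- Applying the `f_α`-NCE objective (asymmetric power generator) to the
α-centered model yields the α-CentNCE objective
`(1/(1-α)) E_{q_d}[ρ_θ^{α-1}] (E_{q_n}[ρ_θ^α])^{(1-α)/α}` up to an additive
constant; in particular `E_{q_n}[ρ̃_{θ;α}^α] = 1` for the centered ratio. -/
theorem falpha_NCE_centered_model {X : Type*} [MeasurableSpace X] (μ : Measure X)
    (qd qn : X → ℝ) (φθ : X → ℝ) (α : ℝ) (hα0 : α ≠ 0) (hα1 : α ≠ 1)
    (hqd : ∀ x, 0 ≤ qd x) (hqn : ∀ x, 0 < qn x) (hφ : ∀ x, 0 < φθ x)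
    (hqd1 : ∫ x, qd x ∂μ = 1) (hqn1 : ∫ x, qn x ∂μ = 1)
    -- the density ratio, its centered version, and moment hypotheses
    (ρ : X → ℝ) (hρ : ∀ x, ρ x = φθ x / qn x)
    (Z : ℝ) (hZ : Z = (∫ x, (ρ x) ^ α * qn x ∂μ) ^ (1 / α)) (hZpos : 0 < Z)
    (ρt : X → ℝ) (hρt : ∀ x, ρt x = (φθ x / Z) / qn x)
    (hint1 : Integrable (fun x => (ρ x) ^ α * qn x) μ)
    (hint2 : Integrable (fun x => (ρ x) ^ (α - 1) * qd x) μ)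
    (hpos1 : 0 < ∫ x, (ρ x) ^ α * qn x ∂μ) :
    -- (1) the centered ratio has unit α-moment under q_n
    (∫ x, (ρt x) ^ α * qn x ∂μ = 1) ∧
    -- (2) the f_α-NCE objective of the centered model equals the α-CentNCE
    --     objective up to an additive constant
    (-(∫ x, ((ρt x) ^ (α - 1) / (α - 1)) * qd x ∂μ)
       + ∫ x, ((ρt x) ^ α / α + 1 / (α * (α - 1))) * qn x ∂μ
     = (1 / (1 - α)) * (∫ x, (ρ x) ^ (α - 1) * qd x ∂μ)
         * (∫ x, (ρ x) ^ α * qn x ∂μ) ^ ((1 - α) / α)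
       + (1 / α + 1 / (α * (α - 1)))) := by

  have hρpos : ∀ x, 0 < ρ x := fun x => by rw [hρ x]; exact div_pos (hφ x) (hqn x)
  set M := ∫ x, (ρ x) ^ α * qn x ∂μ with hM
  have hMne : M ≠ 0 := hpos1.ne'
  have hZα : Z ^ α = M := by
    rw [hZ, ← Real.rpow_mul hpos1.le, one_div, inv_mul_cancel₀ hα0, Real.rpow_one]
  have hρtρ : ∀ x, ρt x = ρ x / Z := by
    intro x; rw [hρt x, hρ x, div_div, div_div, mul_comm]
  have key1 : ∀ x, (ρt x) ^ α * qn x = M⁻¹ * ((ρ x) ^ α * qn x) := by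
    intro x
    rw [hρtρ x, Real.div_rpow (hρpos x).le hZpos.le, hZα, div_eq_inv_mul, mul_assoc]
  have part1 : ∫ x, (ρt x) ^ α * qn x ∂μ = 1 := by
    simp_rw [key1]; rw [integral_const_mul, inv_mul_cancel₀ hMne]
  refine ⟨part1, ?_⟩
  have hqnint : Integrable qn μ := by
    by_contra h; rw [integral_undef h] at hqn1; exact one_ne_zero hqn1.symm
  have key2 : ∀ x, ((ρt x) ^ (α - 1) / (α - 1)) * qd x
      = ((α - 1)⁻¹ * (Z ^ (α - 1))⁻¹) * ((ρ x) ^ (α - 1) * qd x) := by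
    intro x
    rw [hρtρ x, Real.div_rpow (hρpos x).le hZpos.le]; ring
  have key1' : ∀ x, (ρt x) ^ α / α * qn x = (α⁻¹ * M⁻¹) * ((ρ x) ^ α * qn x) := by
    intro x
    rw [div_mul_eq_mul_div, key1 x]; ring
  have hIqd : ∫ x, ((ρt x) ^ (α - 1) / (α - 1)) * qd x ∂μ
      = ((α - 1)⁻¹ * (Z ^ (α - 1))⁻¹) * ∫ x, (ρ x) ^ (α - 1) * qd x ∂μ := by
    simp_rw [key2]; rw [integral_const_mul]
  have int_a : Integrable (fun x => (ρt x) ^ α / α * qn x) μ := by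
    have h : (fun x => (ρt x) ^ α / α * qn x)
        = fun x => (α⁻¹ * M⁻¹) * ((ρ x) ^ α * qn x) := funext key1'
    rw [h]; exact hint1.const_mul _
  have int_b : Integrable (fun x => 1 / (α * (α - 1)) * qn x) μ := hqnint.const_mul _
  have hsplit : ∫ x, ((ρt x) ^ α / α + 1 / (α * (α - 1))) * qn x ∂μ
      = ∫ x, (ρt x) ^ α / α * qn x ∂μ + ∫ x, 1 / (α * (α - 1)) * qn x ∂μ := by
    simp_rw [add_mul]; exact integral_add int_a int_b
  have hIa : ∫ x, (ρt x) ^ α / α * qn x ∂μ = α⁻¹ := by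
    simp_rw [key1']; rw [integral_const_mul, ← hM, mul_assoc, inv_mul_cancel₀ hMne, mul_one]
  have hIb : ∫ x, 1 / (α * (α - 1)) * qn x ∂μ = 1 / (α * (α - 1)) := by
    rw [integral_const_mul, hqn1, mul_one]
  have hZinv : (Z ^ (α - 1))⁻¹ = M ^ ((1 - α) / α) := by
    rw [hZ, ← Real.rpow_mul hpos1.le, ← Real.rpow_neg hpos1.le]
    congr 1; field_simp; ring
  have hα1' : (1 : ℝ) - α ≠ 0 := sub_ne_zero.mpr (fun h => hα1 h.symm)
  have hα1'' : α - 1 ≠ 0 := sub_ne_zero.mpr hα1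
  rw [hsplit, hIa, hIb, hIqd, hZinv]
  field_simp
  ring
end

section
/- Equivalence of f_α-NCE and α-CentNCE stationarity: θ minimizes L_α^cent(θ) = (1/(1-α)) E_{q̂_d}[r_θ^{α-1}] (E_{q̂_n}[r_θ^α])^{(1-α)/α} if and only if (θ, ν*(θ)) with e^{ν*(θ)} = E_{q̂_d}[r_θ^{α-1}]/E_{q̂_n}[r_θ^α] minimizes the augmented f_α-NCE objective over (θ, ν); equivalently, both stationarity conditions reduce to E_{q̂_n}[r_θ^α ∇_θ log r_θ] E_{q̂_d}[r_θ^{α-1}] = E_{q̂_n}[r_θ^α] E_{q̂_d}[r_θ^{α-1} ∇_θ log r_θ]. -/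
open RealInnerProductSpace

lemma aux_hasFDerivAt {p : ℕ} (c : EuclideanSpace ℝ (Fin p)) (q : ℝ) (hq : 0 < q)
    (s : ℝ) (θ : EuclideanSpace ℝ (Fin p)) :
    HasFDerivAt (fun θ' => (Real.exp ⟪θ', c⟫ / q) ^ s)
      ((s * (Real.exp ⟪θ, c⟫ / q) ^ s) • innerSL ℝ c) θ := by
  have key : ∀ θ' : EuclideanSpace ℝ (Fin p),
      (Real.exp ⟪θ', c⟫ / q) ^ s = Real.exp (s * ⟪c, θ'⟫) * q ^ (-s) := by
    intro θ'
    rw [Real.rpow_def_of_pos (by positivity), Real.log_div (Real.exp_ne_zero _) hq.ne',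
      Real.log_exp, Real.rpow_def_of_pos hq, ← Real.exp_add, real_inner_comm]
    ring_nf
  simp only [key]
  have h1 : HasFDerivAt (fun θ' : EuclideanSpace ℝ (Fin p) => s * ⟪c, θ'⟫)
      (s • innerSL ℝ c) θ := ((innerSL ℝ c).hasFDerivAt).const_mul s
  have h2 := (h1.exp).mul_const (q ^ (-s))
  refine h2.congr_fderiv ?_
  ext v
  simp only [ContinuousLinearMap.smul_apply, smul_eq_mul]
  ring

lemma aux_sum_hasFDerivAt {X : Type*} {p n : ℕ} (ψ : X → EuclideanSpace ℝ (Fin p))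
    (qn : X → ℝ) (hqn : ∀ x, 0 < qn x) (s : ℝ) (x : Fin n → X)
    (θ : EuclideanSpace ℝ (Fin p)) :
    HasFDerivAt (fun θ' => (1 / (n : ℝ)) * ∑ i, (Real.exp ⟪θ', ψ (x i)⟫ / qn (x i)) ^ s)
      (s • innerSL ℝ ((1 / (n : ℝ)) •
        ∑ i, ((Real.exp ⟪θ, ψ (x i)⟫ / qn (x i)) ^ s) • ψ (x i))) θ := by
  have hs : HasFDerivAt
      (fun θ' => ∑ i, (Real.exp ⟪θ', ψ (x i)⟫ / qn (x i)) ^ s)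
      (∑ i, (s * (Real.exp ⟪θ, ψ (x i)⟫ / qn (x i)) ^ s) • innerSL ℝ (ψ (x i))) θ :=
    HasFDerivAt.fun_sum (fun i (_ : i ∈ Finset.univ) =>
      aux_hasFDerivAt (ψ (x i)) (qn (x i)) (hqn _) s θ)
  have h := hs.const_mul (1 / (n : ℝ))
  refine h.congr_fderiv ?_
  ext v
  simp only [ContinuousLinearMap.smul_apply, innerSL_apply_apply, smul_eq_mul,
    real_inner_smul_left, sum_inner, ContinuousLinearMap.coe_sum', Finset.sum_apply,
    Finset.mul_sum]
  apply Finset.sum_congr rfl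
  intro i _
  ring


/-- Equivalence of `f_α`-NCE and α-CentNCE stationarity for exponential
families: the stationarity conditions of the α-CentNCE objective at `θ` and of
the augmented `f_α`-NCE objective at `(θ, ν*(θ))` both reduce to the balance
equation
`E_n[r^α] • E_d[r^{α-1} ψ] = E_d[r^{α-1}] • E_n[r^α ψ]`. -/
theorem falphaNCE_centNCE_stationarity_equiv {X : Type*} {p : ℕ}
    (ψ : X → EuclideanSpace ℝ (Fin p)) (qn : X → ℝ) (hqn : ∀ x, 0 < qn x)
    (α : ℝ) (hα0 : α ≠ 0) (hα1 : α ≠ 1)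
    -- empirical samples
    {nd nn : ℕ} (hnd : 0 < nd) (hnn : 0 < nn)
    (xd : Fin nd → X) (xn : Fin nn → X)
    -- the density-ratio model
    (r : EuclideanSpace ℝ (Fin p) → X → ℝ)
    (hr : ∀ θ x, r θ x = Real.exp ⟪θ, ψ x⟫ / qn x)
    -- empirical moments
    (Ed : (X → ℝ) → ℝ) (hEd : ∀ F, Ed F = (1 / (nd : ℝ)) * ∑ i, F (xd i))
    (En : (X → ℝ) → ℝ) (hEn : ∀ F, En F = (1 / (nn : ℝ)) * ∑ i, F (xn i))
    -- the α-CentNCE objective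
    (Lcent : EuclideanSpace ℝ (Fin p) → ℝ)
    (hLcent : ∀ θ, Lcent θ = (1 / (1 - α)) *
      Ed (fun x => (r θ x) ^ (α - 1)) * (En (fun x => (r θ x) ^ α)) ^ ((1 - α) / α))
    -- the augmented f_α-NCE objective
    (L : EuclideanSpace ℝ (Fin p) × ℝ → ℝ)
    (hL : ∀ θ ν, L (θ, ν) =
      (1 / (1 - α)) * Real.exp (ν * (α - 1)) * Ed (fun x => (r θ x) ^ (α - 1))
      + (1 / α) * Real.exp (ν * α) * En (fun x => (r θ x) ^ α))
    -- the optimal ν for fixed θ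
    (νstar : EuclideanSpace ℝ (Fin p) → ℝ)
    (hνstar : ∀ θ, Real.exp (νstar θ) =
      Ed (fun x => (r θ x) ^ (α - 1)) / En (fun x => (r θ x) ^ α))
    (θ : EuclideanSpace ℝ (Fin p)) :
    (fderiv ℝ Lcent θ = 0 ↔
      En (fun x => (r θ x) ^ α) •
        ((1 / (nd : ℝ)) • ∑ i, (r θ (xd i)) ^ (α - 1) • ψ (xd i))
      = Ed (fun x => (r θ x) ^ (α - 1)) •
        ((1 / (nn : ℝ)) • ∑ i, (r θ (xn i)) ^ α • ψ (xn i))) ∧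
    (fderiv ℝ L (θ, νstar θ) = 0 ↔
      En (fun x => (r θ x) ^ α) •
        ((1 / (nd : ℝ)) • ∑ i, (r θ (xd i)) ^ (α - 1) • ψ (xd i))
      = Ed (fun x => (r θ x) ^ (α - 1)) •
        ((1 / (nn : ℝ)) • ∑ i, (r θ (xn i)) ^ α • ψ (xn i))) := by
  have h1α : (1 : ℝ) - α ≠ 0 := sub_ne_zero_of_ne (Ne.symm hα1)
  have hrpos : ∀ x, 0 < r θ x := fun x => by rw [hr]; exact div_pos (Real.exp_pos _) (hqn x)
  set A : ℝ := Ed (fun x => (r θ x) ^ (α - 1)) with hA_def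
  set B : ℝ := En (fun x => (r θ x) ^ α) with hB_def
  set Sd : EuclideanSpace ℝ (Fin p) :=
    (1 / (nd : ℝ)) • ∑ i, (r θ (xd i)) ^ (α - 1) • ψ (xd i) with hSd_def
  set Sn : EuclideanSpace ℝ (Fin p) :=
    (1 / (nn : ℝ)) • ∑ i, (r θ (xn i)) ^ α • ψ (xn i) with hSn_def
  have hApos : 0 < A := by
    rw [hA_def, hEd]
    have : Nonempty (Fin nd) := ⟨⟨0, hnd⟩⟩
    exact mul_pos (by positivity)
      (Finset.sum_pos (fun i _ => Real.rpow_pos_of_pos (hrpos _) _) Finset.univ_nonempty)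
  have hBpos : 0 < B := by
    rw [hB_def, hEn]
    have : Nonempty (Fin nn) := ⟨⟨0, hnn⟩⟩
    exact mul_pos (by positivity)
      (Finset.sum_pos (fun i _ => Real.rpow_pos_of_pos (hrpos _) _) Finset.univ_nonempty)
  have hBne : B ≠ 0 := hBpos.ne'
  -- derivative of the data moment
  have hA : HasFDerivAt (fun θ' => Ed (fun x => (r θ' x) ^ (α - 1)))
      ((α - 1) • innerSL ℝ Sd) θ := by
    have h := aux_sum_hasFDerivAt ψ qn hqn (α - 1) xd θ
    rw [hSd_def]
    simp only [hEd, hr]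
    exact h
  have hB : HasFDerivAt (fun θ' => En (fun x => (r θ' x) ^ α))
      (α • innerSL ℝ Sn) θ := by
    have h := aux_sum_hasFDerivAt ψ qn hqn α xn θ
    rw [hSn_def]
    simp only [hEn, hr]
    exact h
  set β : ℝ := (1 - α) / α with hβ_def
  have hBβ : B ^ β = B ^ (β - 1) * B := by
    rw [← Real.rpow_add_one hBne, sub_add_cancel]
  -- first part: Lcent
  have hfunC : Lcent = fun θ' => (1 / (1 - α)) *
      Ed (fun x => (r θ' x) ^ (α - 1)) * (En (fun x => (r θ' x) ^ α)) ^ β :=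
    funext hLcent
  have hLc := ((hA.const_mul (1 / (1 - α))).mul (HasFDerivAt.rpow_const (p := β) hB (Or.inl hBne)))
  simp only [Pi.mul_def] at hLc
  rw [← hfunC] at hLc
  have e1 : 1 / (1 - α) * β * α = 1 := by rw [hβ_def]; field_simp
  have e2 : (1 : ℝ) / (1 - α) * (α - 1) = -1 := by field_simp; ring
  have keyC : ∀ v, (fderiv ℝ Lcent θ) v = B ^ (β - 1) * ⟪A • Sn - B • Sd, v⟫ := by
    intro v
    rw [hLc.fderiv]
    simp only [← hA_def, ← hB_def, ContinuousLinearMap.add_apply,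
      ContinuousLinearMap.smul_apply, innerSL_apply_apply, smul_eq_mul, inner_sub_left,
      real_inner_smul_left, hBβ]
    linear_combination (A * B ^ (β - 1) * ⟪Sn, v⟫) * e1 + (B ^ (β - 1) * B * ⟪Sd, v⟫) * e2
  have huC : A • Sn - B • Sd = 0 ↔ B • Sd = A • Sn := by
    rw [sub_eq_zero]; exact ⟨fun h => h.symm, fun h => h.symm⟩
  have hcoefC : B ^ (β - 1) ≠ 0 := (Real.rpow_pos_of_pos hBpos _).ne'
  constructor
  · constructor
    · intro h0
      have hu := keyC (A • Sn - B • Sd)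
      rw [h0] at hu
      simp only [ContinuousLinearMap.zero_apply] at hu
      have : ⟪A • Sn - B • Sd, A • Sn - B • Sd⟫ = 0 := by
        rcases mul_eq_zero.mp hu.symm with h | h
        · exact absurd h hcoefC
        · exact h
      exact huC.mp (inner_self_eq_zero.mp this)
    · intro heq
      have hu0 : A • Sn - B • Sd = 0 := huC.mpr heq
      ext v
      rw [keyC v, hu0]
      simp
  -- second part: L
  · set ν : ℝ := νstar θ with hν_def
    set ea : ℝ := Real.exp (ν * (α - 1)) with hea_def
    set eb : ℝ := Real.exp (ν * α) with heb_def
    have hab : eb * B = ea * A := by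
      have h := hνstar θ
      rw [← hA_def, ← hB_def] at h
      have hh : eb = ea * (A / B) := by
        rw [heb_def, hea_def, ← h, ← hν_def, ← Real.exp_add]; ring_nf
      rw [hh]; field_simp
    have hfunL : L = fun pt : EuclideanSpace ℝ (Fin p) × ℝ =>
        (1 / (1 - α)) * (Real.exp (pt.2 * (α - 1)) * Ed (fun x => (r pt.1 x) ^ (α - 1)))
        + (1 / α) * (Real.exp (pt.2 * α) * En (fun x => (r pt.1 x) ^ α)) :=
      funext fun pt => by obtain ⟨a, b⟩ := pt; rw [hL a b]; ring
    have hea1 : HasFDerivAt (fun pt : EuclideanSpace ℝ (Fin p) × ℝ =>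
        Real.exp (pt.2 * (α - 1)))
        ((ea * (α - 1)) • ContinuousLinearMap.snd ℝ (EuclideanSpace ℝ (Fin p)) ℝ) (θ, ν) := by
      have h1 : HasDerivAt (fun t : ℝ => Real.exp (t * (α - 1))) (ea * (α - 1)) ν := by
        rw [hea_def]
        simpa using ((hasDerivAt_id ν).mul_const (α - 1)).exp
      exact h1.comp_hasFDerivAt (θ, ν) (hasFDerivAt_snd (𝕜 := ℝ) (p := (θ, ν)))
    have heb1 : HasFDerivAt (fun pt : EuclideanSpace ℝ (Fin p) × ℝ =>
        Real.exp (pt.2 * α))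
        ((eb * α) • ContinuousLinearMap.snd ℝ (EuclideanSpace ℝ (Fin p)) ℝ) (θ, ν) := by
      have h1 : HasDerivAt (fun t : ℝ => Real.exp (t * α)) (eb * α) ν := by
        rw [heb_def]
        simpa using ((hasDerivAt_id ν).mul_const α).exp
      exact h1.comp_hasFDerivAt (θ, ν) (hasFDerivAt_snd (𝕜 := ℝ) (p := (θ, ν)))
    have hAc : HasFDerivAt (fun pt : EuclideanSpace ℝ (Fin p) × ℝ =>
        Ed (fun x => (r pt.1 x) ^ (α - 1)))
        (((α - 1) • innerSL ℝ Sd).comp (ContinuousLinearMap.fst ℝ (EuclideanSpace ℝ (Fin p)) ℝ)) (θ, ν) :=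
      (hA.comp (θ, ν) (hasFDerivAt_fst (𝕜 := ℝ) (p := (θ, ν))) :)
    have hBc : HasFDerivAt (fun pt : EuclideanSpace ℝ (Fin p) × ℝ =>
        En (fun x => (r pt.1 x) ^ α))
        ((α • innerSL ℝ Sn).comp (ContinuousLinearMap.fst ℝ (EuclideanSpace ℝ (Fin p)) ℝ)) (θ, ν) :=
      (hB.comp (θ, ν) (hasFDerivAt_fst (𝕜 := ℝ) (p := (θ, ν))) :)
    have hdL := ((hea1.mul hAc).const_mul (1 / (1 - α))).add
      ((heb1.mul hBc).const_mul (1 / α))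
    simp only [Pi.mul_def, Pi.add_def] at hdL
    rw [← hfunL] at hdL
    have keyL : ∀ vw : EuclideanSpace ℝ (Fin p) × ℝ,
        (fderiv ℝ L (θ, ν)) vw = (ea / B) * ⟪A • Sn - B • Sd, vw.1⟫ := by
      intro vw
      rw [hdL.fderiv]
      have e2 : (1 : ℝ) / (1 - α) * (α - 1) = -1 := by field_simp; ring
      have e3 : (1 : ℝ) / α * α = 1 := by field_simp
      simp only [ContinuousLinearMap.add_apply, ContinuousLinearMap.smul_apply,
        ContinuousLinearMap.comp_apply, ContinuousLinearMap.coe_fst',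
        ContinuousLinearMap.coe_snd', innerSL_apply_apply, smul_eq_mul,
        inner_sub_left, real_inner_smul_left, ← hA_def, ← hB_def,
        ← hea_def, ← heb_def]
      conv_rhs => rw [div_mul_eq_mul_div]
      rw [eq_div_iff hBne]
      linear_combination ((ea * ⟪Sd, vw.1⟫ + A * ea * vw.2) * B) * e2
        + ((eb * ⟪Sn, vw.1⟫ + B * eb * vw.2) * B) * e3
        + (vw.2 * B + ⟪Sn, vw.1⟫) * hab
    have hcoefL : ea / B ≠ 0 := div_ne_zero (Real.exp_pos _).ne' hBne
    constructor
    · intro h0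
      have hu := keyL (A • Sn - B • Sd, (0 : ℝ))
      rw [h0] at hu
      simp only [ContinuousLinearMap.zero_apply] at hu
      have : ⟪A • Sn - B • Sd, A • Sn - B • Sd⟫ = 0 := by
        rcases mul_eq_zero.mp hu.symm with h | h
        · exact absurd h hcoefL
        · exact h
      exact huC.mp (inner_self_eq_zero.mp this)
    · intro heq
      have hu0 : A • Sn - B • Sd = 0 := huC.mpr heq
      apply ContinuousLinearMap.ext
      intro vw
      rw [keyL vw, hu0]
      simp
end

section
/- For the exponential family φ_θ(x) = exp(⟨θ, ψ(x)⟩), the gradient of the f-NCE objective is ∇_θ L̂(θ) = -(1/ν) E_{q̂_d}[ψ ρ_θ f''(ρ_θ)] + E_{q̂_n}[ψ ρ_θ² f''(ρ_θ)] and the Hessian is ∇²_θ L̂(θ) = (1/ν) E_{q̂_d}[ψψᵀ ρ_θ g_f(ρ_θ)] + E_{q̂_n}[ψψᵀ ρ_θ²(f''(ρ_θ) - g_f(ρ_θ))], where g_f(ρ) = -(ρ f'''(ρ) + f''(ρ)). -/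
open RealInnerProductSpace

section Aux

variable {E : Type*} [NormedAddCommGroup E] [InnerProductSpace ℝ E]

lemma fNCE_aux_inner (w θ : E) :
    HasFDerivAt (fun z : E => ⟪z, w⟫) (innerSL ℝ w) θ := by
  have h : (fun z : E => ⟪z, w⟫) = fun z : E => innerSL ℝ w z := by
    funext z; simp [real_inner_comm]
  rw [h]
  exact (innerSL ℝ w).hasFDerivAt

lemma fNCE_aux_scalar (w θ : E) {s : ℝ → ℝ} {d : ℝ}
    (hs : HasDerivAt s d ⟪θ, w⟫) :
    HasFDerivAt (fun z : E => s ⟪z, w⟫) (d • (innerSL ℝ w)) θ :=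
  hs.comp_hasFDerivAt θ (fNCE_aux_inner w θ)

lemma fNCE_aux_vec {F : Type*} [NormedAddCommGroup F] [NormedSpace ℝ F]
    (w : E) (v0 : F) (θ : E) {s : ℝ → ℝ} {d : ℝ}
    (hs : HasDerivAt s d ⟪θ, w⟫) :
    HasFDerivAt (fun z : E => s ⟪z, w⟫ • v0)
      ((d • (innerSL ℝ w)).smulRight v0) θ :=
  (fNCE_aux_scalar w θ hs).smul_const v0

end Aux

set_option maxHeartbeats 1000000 in
/-- Gradient and Hessian of the empirical f-NCE objective for an exponential
family `φ_θ(x) = exp⟪θ, ψ(x)⟫`: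
`∇L̂(θ) = -(1/ν) E_d[ψ ρ f''(ρ)] + E_n[ψ ρ² f''(ρ)]` and
`∇²L̂(θ) = (1/ν) E_d[ψψᵀ ρ g_f(ρ)] + E_n[ψψᵀ ρ²(f''(ρ) - g_f(ρ))]`,
with `g_f(ρ) = -(ρ f'''(ρ) + f''(ρ))`. -/
theorem fNCE_gradient_hessian {X : Type*} {p : ℕ}
    (ψ : X → EuclideanSpace ℝ (Fin p)) (qn : X → ℝ) (hqn : ∀ x, 0 < qn x)
    (ν : ℝ) (hν : 0 < ν)
    (f f' f'' f''' : ℝ → ℝ)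
    (hf1 : ∀ ρ : ℝ, 0 < ρ → HasDerivAt f (f' ρ) ρ)
    (hf2 : ∀ ρ : ℝ, 0 < ρ → HasDerivAt f' (f'' ρ) ρ)
    (hf3 : ∀ ρ : ℝ, 0 < ρ → HasDerivAt f'' (f''' ρ) ρ)
    (gf : ℝ → ℝ) (hgf : ∀ ρ, gf ρ = -(ρ * f''' ρ + f'' ρ))
    -- empirical samples
    {nd nn : ℕ} (hnd : 0 < nd) (hnn : 0 < nn)
    (xd : Fin nd → X) (xn : Fin nn → X)
    -- the density-ratio model and the empirical objective
    (ρ : EuclideanSpace ℝ (Fin p) → X → ℝ)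
    (hρ : ∀ θ x, ρ θ x = Real.exp ⟪θ, ψ x⟫ / (ν * qn x))
    (Lhat : EuclideanSpace ℝ (Fin p) → ℝ)
    (hLhat : ∀ θ, Lhat θ =
      -(1 / ν) * ((1 / (nd : ℝ)) * ∑ i, f' (ρ θ (xd i)))
      + (1 / (nn : ℝ)) * ∑ i, (ρ θ (xn i) * f' (ρ θ (xn i)) - f (ρ θ (xn i)))) :
    ∀ θ : EuclideanSpace ℝ (Fin p),
      -- gradient formula
      (HasGradientAt Lhat
        (-(1 / ν) • ((1 / (nd : ℝ)) •
            ∑ i, (ρ θ (xd i) * f'' (ρ θ (xd i))) • ψ (xd i))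
          + (1 / (nn : ℝ)) •
            ∑ i, ((ρ θ (xn i)) ^ 2 * f'' (ρ θ (xn i))) • ψ (xn i)) θ) ∧
      -- Hessian formula (as a bilinear form)
      (∀ u v : EuclideanSpace ℝ (Fin p),
        iteratedFDeriv ℝ 2 Lhat θ ![u, v] =
          (1 / ν) * ((1 / (nd : ℝ)) *
              ∑ i, ⟪ψ (xd i), u⟫ * ⟪ψ (xd i), v⟫ * (ρ θ (xd i) * gf (ρ θ (xd i))))
          + (1 / (nn : ℝ)) *
              ∑ i, ⟪ψ (xn i), u⟫ * ⟪ψ (xn i), v⟫ *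
                ((ρ θ (xn i)) ^ 2 * (f'' (ρ θ (xn i)) - gf (ρ θ (xn i))))) := by
  classical
  -- per-sample scalar model
  set φ : X → ℝ → ℝ := fun x t => Real.exp t / (ν * qn x) with hφdef
  have hpos : ∀ (x : X) (t : ℝ), 0 < φ x t := fun x t =>
    div_pos (Real.exp_pos t) (mul_pos hν (hqn x))
  have hφ : ∀ (x : X) (t : ℝ), HasDerivAt (φ x) (φ x t) t := fun x t =>
    (Real.hasDerivAt_exp t).div_const _
  have hρφ : ∀ (θ' : EuclideanSpace ℝ (Fin p)) (x : X), ρ θ' x = φ x ⟪θ', ψ x⟫ := fun θ' x => hρ θ' x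
  -- first derivatives of the per-sample scalar summands
  have hA : ∀ (x : X) (t : ℝ),
      HasDerivAt (fun t => f' (φ x t)) (φ x t * f'' (φ x t)) t := by
    intro x t
    have := (hf2 (φ x t) (hpos x t)).comp t (hφ x t)
    rw [mul_comm] at this
    exact this
  have hB : ∀ (x : X) (t : ℝ),
      HasDerivAt (fun t => φ x t * f' (φ x t) - f (φ x t))
        ((φ x t) ^ 2 * f'' (φ x t)) t := by
    intro x t
    have h1 := (hφ x t).mul (hA x t)
    have h2 := (hf1 (φ x t) (hpos x t)).comp t (hφ x t)
    have := h1.sub h2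
    exact this.congr_deriv (by ring)
  -- second derivatives of the per-sample scalar summands
  have hA2 : ∀ (x : X) (t : ℝ),
      HasDerivAt (fun t => φ x t * f'' (φ x t))
        (-(φ x t * gf (φ x t))) t := by
    intro x t
    have h3 := (hf3 (φ x t) (hpos x t)).comp t (hφ x t)
    have := (hφ x t).mul h3
    exact this.congr_deriv (by rw [hgf]; simp only [Function.comp]; ring)
  have hB2 : ∀ (x : X) (t : ℝ),
      HasDerivAt (fun t => (φ x t) ^ 2 * f'' (φ x t))
        ((φ x t) ^ 2 * (f'' (φ x t) - gf (φ x t))) t := by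
    intro x t
    have h3 := (hf3 (φ x t) (hpos x t)).comp t (hφ x t)
    have hsq : HasDerivAt (fun t => (φ x t) ^ 2) (2 * φ x t * φ x t) t := by
      exact ((hφ x t).pow 2).congr_deriv (by norm_num)
    have := hsq.mul h3
    exact this.congr_deriv (by rw [hgf]; simp only [Function.comp]; ring)
  -- rewrite Lhat through φ
  have hL : Lhat = fun θ' : EuclideanSpace ℝ (Fin p) =>
      -(1 / ν) * ((1 / (nd : ℝ)) * ∑ i, f' (φ (xd i) ⟪θ', ψ (xd i)⟫))
      + (1 / (nn : ℝ)) * ∑ i,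
          (φ (xn i) ⟪θ', ψ (xn i)⟫ * f' (φ (xn i) ⟪θ', ψ (xn i)⟫)
            - f (φ (xn i) ⟪θ', ψ (xn i)⟫)) := by
    funext θ'
    rw [hLhat]
    simp only [hρφ]
  -- the Fréchet derivative of Lhat, as a dual-valued function of θ
  set D : EuclideanSpace ℝ (Fin p) → (EuclideanSpace ℝ (Fin p) →L[ℝ] ℝ) :=
    fun θ' =>
      -(1 / ν) • ((1 / (nd : ℝ)) •
          ∑ i, (φ (xd i) ⟪θ', ψ (xd i)⟫ * f'' (φ (xd i) ⟪θ', ψ (xd i)⟫)) •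
            (innerSL ℝ (ψ (xd i))))
        + (1 / (nn : ℝ)) •
          ∑ i, ((φ (xn i) ⟪θ', ψ (xn i)⟫) ^ 2 * f'' (φ (xn i) ⟪θ', ψ (xn i)⟫)) •
            (innerSL ℝ (ψ (xn i))) with hDdef
  have hDall : ∀ θ' : EuclideanSpace ℝ (Fin p), HasFDerivAt Lhat (D θ') θ' := by
    intro θ'
    have hd1 : HasFDerivAt
        (fun θ'' : EuclideanSpace ℝ (Fin p) =>
          ∑ i, f' (φ (xd i) ⟪θ'', ψ (xd i)⟫))
        (∑ i, (φ (xd i) ⟪θ', ψ (xd i)⟫ * f'' (φ (xd i) ⟪θ', ψ (xd i)⟫)) •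
          (innerSL ℝ (ψ (xd i)))) θ' :=
      HasFDerivAt.fun_sum fun i _ => fNCE_aux_scalar _ θ' (hA (xd i) _)
    have hn1 : HasFDerivAt
        (fun θ'' : EuclideanSpace ℝ (Fin p) => ∑ i,
          (φ (xn i) ⟪θ'', ψ (xn i)⟫ * f' (φ (xn i) ⟪θ'', ψ (xn i)⟫)
            - f (φ (xn i) ⟪θ'', ψ (xn i)⟫)))
        (∑ i, ((φ (xn i) ⟪θ', ψ (xn i)⟫) ^ 2 * f'' (φ (xn i) ⟪θ', ψ (xn i)⟫)) •
          (innerSL ℝ (ψ (xn i)))) θ' :=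
      HasFDerivAt.fun_sum fun i _ => fNCE_aux_scalar _ θ' (hB (xn i) _)
    rw [hL, hDdef]
    exact ((hd1.const_mul _).const_mul _).add (hn1.const_mul _)
  have hfd : fderiv ℝ Lhat = D := funext fun θ' => (hDall θ').fderiv
  intro θ
  constructor
  · -- gradient formula
    rw [hasGradientAt_iff_hasFDerivAt]
    have hEq : (InnerProductSpace.toDual ℝ (EuclideanSpace ℝ (Fin p)))
        (-(1 / ν) • ((1 / (nd : ℝ)) •
            ∑ i, (ρ θ (xd i) * f'' (ρ θ (xd i))) • ψ (xd i))
          + (1 / (nn : ℝ)) •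
            ∑ i, ((ρ θ (xn i)) ^ 2 * f'' (ρ θ (xn i))) • ψ (xn i)) = D θ := by
      apply ContinuousLinearMap.ext
      intro v
      simp [hDdef, hρφ, inner_add_left, real_inner_smul_left, inner_sum,
        Finset.mul_sum]
    rw [hEq]
    exact hDall θ
  · -- Hessian formula
    intro u v
    have hM : HasFDerivAt D
        (-(1 / ν) • ((1 / (nd : ℝ)) •
            ∑ i, ContinuousLinearMap.smulRight
              ((-(φ (xd i) ⟪θ, ψ (xd i)⟫ * gf (φ (xd i) ⟪θ, ψ (xd i)⟫))) •
                innerSL ℝ (ψ (xd i))) (innerSL ℝ (ψ (xd i))))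
          + (1 / (nn : ℝ)) •
            ∑ i, ContinuousLinearMap.smulRight
              (((φ (xn i) ⟪θ, ψ (xn i)⟫) ^ 2 *
                  (f'' (φ (xn i) ⟪θ, ψ (xn i)⟫) - gf (φ (xn i) ⟪θ, ψ (xn i)⟫))) •
                innerSL ℝ (ψ (xn i))) (innerSL ℝ (ψ (xn i)))) θ := by
      rw [hDdef]
      exact (((HasFDerivAt.fun_sum fun i _ =>
          fNCE_aux_vec _ _ θ (hA2 (xd i) _)).fun_const_smul _).fun_const_smul _).fun_add
        ((HasFDerivAt.fun_sum fun i _ =>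
          fNCE_aux_vec _ _ θ (hB2 (xn i) _)).fun_const_smul _)
    have h2 := hM.fderiv
    rw [iteratedFDeriv_two_apply, hfd, h2]
    simp only [Matrix.cons_val_zero, Matrix.cons_val_one, Matrix.head_cons,
      ContinuousLinearMap.add_apply, ContinuousLinearMap.coe_smul',
      Pi.smul_apply, ContinuousLinearMap.coe_sum', Finset.sum_apply,
      ContinuousLinearMap.smulRight_apply, ContinuousLinearMap.smul_apply,
      innerSL_apply_apply, smul_eq_mul, hρφ]
    have e1 : (∑ i : Fin nd,
        -(φ (xd i) ⟪θ, ψ (xd i)⟫ * gf (φ (xd i) ⟪θ, ψ (xd i)⟫)) *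
          ⟪ψ (xd i), u⟫ * ⟪ψ (xd i), v⟫)
        = -∑ i : Fin nd, ⟪ψ (xd i), u⟫ * ⟪ψ (xd i), v⟫ *
            (φ (xd i) ⟪θ, ψ (xd i)⟫ * gf (φ (xd i) ⟪θ, ψ (xd i)⟫)) := by
      rw [← Finset.sum_neg_distrib]
      exact Finset.sum_congr rfl fun i _ => by ring
    have e2 : (∑ i : Fin nn,
        (φ (xn i) ⟪θ, ψ (xn i)⟫) ^ 2 *
          (f'' (φ (xn i) ⟪θ, ψ (xn i)⟫) - gf (φ (xn i) ⟪θ, ψ (xn i)⟫)) *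
          ⟪ψ (xn i), u⟫ * ⟪ψ (xn i), v⟫)
        = ∑ i : Fin nn, ⟪ψ (xn i), u⟫ * ⟪ψ (xn i), v⟫ *
            ((φ (xn i) ⟪θ, ψ (xn i)⟫) ^ 2 *
              (f'' (φ (xn i) ⟪θ, ψ (xn i)⟫) - gf (φ (xn i) ⟪θ, ψ (xn i)⟫))) :=
      Finset.sum_congr rfl fun i _ => by ring
    rw [e1, e2]
    ring
end

section
/- Convexity of f-NCE for exponential families: if f is three-times differentiable and g_f(ρ) := -(ρ f'''(ρ) + f''(ρ)) satisfies 0 ≤ g_f(ρ) ≤ f''(ρ) for all ρ > 0, then the map θ ↦ L̂_f^nce(θ) is convex on ℝ^p. -/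
open RealInnerProductSpace

private lemma convexOn_univ_of_hasDerivAt2 {F F' F'' : ℝ → ℝ}
    (h1 : ∀ t, HasDerivAt F (F' t) t) (h2 : ∀ t, HasDerivAt F' (F'' t) t)
    (h0 : ∀ t, 0 ≤ F'' t) : ConvexOn ℝ Set.univ F := by
  refine convexOn_of_hasDerivWithinAt2_nonneg convex_univ
    (fun t _ => (h1 t).continuousAt.continuousWithinAt)
    (fun t _ => (h1 t).hasDerivWithinAt) (fun t _ => (h2 t).hasDerivWithinAt)
    (fun t _ => h0 t)

private lemma convexOn_sum' {E : Type*} [AddCommGroup E] [Module ℝ E]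
    {s : Set E} (hs : Convex ℝ s) {ι : Type*} (t : Finset ι) (F : ι → E → ℝ)
    (h : ∀ i ∈ t, ConvexOn ℝ s (F i)) :
    ConvexOn ℝ s (fun x => ∑ i ∈ t, F i x) := by
  classical
  induction t using Finset.cons_induction with
  | empty => simpa using convexOn_const 0 hs
  | cons i t hi ih =>
    simp only [Finset.sum_cons]
    exact (h i (Finset.mem_cons_self i t)).add
      (ih fun j hj => h j (Finset.mem_cons_of_mem hj))

/-- Convexity of the empirical f-NCE objective for exponential families: if
`g_f(ρ) := -(ρ f'''(ρ) + f''(ρ))` satisfies `0 ≤ g_f(ρ) ≤ f''(ρ)` for all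
`ρ > 0`, then `θ ↦ L̂_f^nce(θ)` is convex on `ℝ^p`. -/
theorem fNCE_convexity {X : Type*} {p : ℕ}
    (ψ : X → EuclideanSpace ℝ (Fin p)) (qn : X → ℝ) (hqn : ∀ x, 0 < qn x)
    (ν : ℝ) (hν : 0 < ν)
    (f f' f'' f''' : ℝ → ℝ)
    (hf1 : ∀ ρ : ℝ, 0 < ρ → HasDerivAt f (f' ρ) ρ)
    (hf2 : ∀ ρ : ℝ, 0 < ρ → HasDerivAt f' (f'' ρ) ρ)
    (hf3 : ∀ ρ : ℝ, 0 < ρ → HasDerivAt f'' (f''' ρ) ρ)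
    (gf : ℝ → ℝ) (hgf : ∀ ρ, gf ρ = -(ρ * f''' ρ + f'' ρ))
    (hcond : ∀ ρ : ℝ, 0 < ρ → 0 ≤ gf ρ ∧ gf ρ ≤ f'' ρ)
    -- empirical samples
    {nd nn : ℕ} (hnd : 0 < nd) (hnn : 0 < nn)
    (xd : Fin nd → X) (xn : Fin nn → X)
    -- the density-ratio model and the empirical objective
    (ρ : EuclideanSpace ℝ (Fin p) → X → ℝ)
    (hρ : ∀ θ x, ρ θ x = Real.exp ⟪θ, ψ x⟫ / (ν * qn x))
    (Lhat : EuclideanSpace ℝ (Fin p) → ℝ)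
    (hLhat : ∀ θ, Lhat θ =
      -(1 / ν) * ((1 / (nd : ℝ)) * ∑ i, f' (ρ θ (xd i)))
      + (1 / (nn : ℝ)) * ∑ i, (ρ θ (xn i) * f' (ρ θ (xn i)) - f (ρ θ (xn i)))) :
    ConvexOn ℝ Set.univ Lhat := by
  classical
  -- the scalar density ratio as a function of t, for fixed x
  set r : X → ℝ → ℝ := fun x t => Real.exp t / (ν * qn x) with hr
  have hc : ∀ x : X, 0 < ν * qn x := fun x => mul_pos hν (hqn x)
  have hrpos : ∀ x t, 0 < r x t := fun x t => div_pos (Real.exp_pos t) (hc x)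
  have hrderiv : ∀ x t, HasDerivAt (r x) (r x t) t := by
    intro x t
    simpa [hr] using (Real.hasDerivAt_exp t).div_const (ν * qn x)
  -- convexity of t ↦ -f'(r x t)
  have hA : ∀ x : X, ConvexOn ℝ Set.univ (fun t => -f' (r x t)) := by
    intro x
    refine convexOn_univ_of_hasDerivAt2
      (F' := fun t => -(f'' (r x t) * r x t))
      (F'' := fun t => gf (r x t) * r x t) ?_ ?_ ?_
    · intro t
      exact (((hf2 _ (hrpos x t)).comp t (hrderiv x t))).neg
    · intro t
      have h1 : HasDerivAt (fun t => f'' (r x t))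
          (f''' (r x t) * r x t) t :=
        (hf3 _ (hrpos x t)).comp t (hrderiv x t)
      have := (h1.fun_mul (hrderiv x t)).fun_neg
      refine this.congr_deriv ?_
      simp only [hgf]; ring
    · intro t
      exact mul_nonneg (hcond _ (hrpos x t)).1 (hrpos x t).le
  -- convexity of t ↦ r x t * f'(r x t) - f(r x t)
  have hB : ∀ x : X, ConvexOn ℝ Set.univ
      (fun t => r x t * f' (r x t) - f (r x t)) := by
    intro x
    refine convexOn_univ_of_hasDerivAt2
      (F' := fun t => r x t ^ 2 * f'' (r x t))
      (F'' := fun t => (f'' (r x t) - gf (r x t)) * r x t ^ 2) ?_ ?_ ?_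
    · intro t
      have h1 : HasDerivAt (fun t => f' (r x t)) (f'' (r x t) * r x t) t :=
        (hf2 _ (hrpos x t)).comp t (hrderiv x t)
      have h2 : HasDerivAt (fun t => f (r x t)) (f' (r x t) * r x t) t :=
        (hf1 _ (hrpos x t)).comp t (hrderiv x t)
      have := ((hrderiv x t).fun_mul h1).fun_sub h2
      refine this.congr_deriv ?_
      ring
    · intro t
      have h1 : HasDerivAt (fun t => r x t ^ 2) (2 * r x t * r x t) t := by
        simpa using ((hrderiv x t).fun_pow 2)
      have h2 : HasDerivAt (fun t => f'' (r x t)) (f''' (r x t) * r x t) t :=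
        (hf3 _ (hrpos x t)).comp t (hrderiv x t)
      have := h1.fun_mul h2
      refine this.congr_deriv ?_
      simp only [hgf]; ring
    · intro t
      have h := (hcond _ (hrpos x t)).2
      exact mul_nonneg (by linarith) (sq_nonneg _)
  -- pull back along the linear map θ ↦ ⟪θ, ψ x⟫
  have hinner : ∀ (x : X) (θ : EuclideanSpace ℝ (Fin p)),
      ρ θ x = r x ⟪θ, ψ x⟫ := by
    intro x θ; rw [hρ]
  have hAcomp : ∀ x : X, ConvexOn ℝ Set.univ
      (fun θ : EuclideanSpace ℝ (Fin p) => -f' (ρ θ x)) := by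
    intro x
    have := (hA x).comp_linearMap
      (innerSL ℝ (ψ x)).toLinearMap
    have h2 : ((fun t => -f' (r x t)) ∘
        (innerSL ℝ (ψ x)).toLinearMap)
        = fun θ : EuclideanSpace ℝ (Fin p) => -f' (ρ θ x) := by
      funext θ
      have hsym : (⟪ψ x, θ⟫ : ℝ) = ⟪θ, ψ x⟫ := real_inner_comm _ _
      simp only [Function.comp_apply, ContinuousLinearMap.coe_coe,
        LinearMap.coe_toAffineMap, innerSL_apply_apply, hsym, hinner x θ]
    rwa [h2, Set.preimage_univ] at this
  have hBcomp : ∀ x : X, ConvexOn ℝ Set.univ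
      (fun θ : EuclideanSpace ℝ (Fin p) => ρ θ x * f' (ρ θ x) - f (ρ θ x)) := by
    intro x
    have := (hB x).comp_linearMap
      (innerSL ℝ (ψ x)).toLinearMap
    have h2 : ((fun t => r x t * f' (r x t) - f (r x t)) ∘
        (innerSL ℝ (ψ x)).toLinearMap)
        = fun θ : EuclideanSpace ℝ (Fin p) =>
            ρ θ x * f' (ρ θ x) - f (ρ θ x) := by
      funext θ
      have hsym : (⟪ψ x, θ⟫ : ℝ) = ⟪θ, ψ x⟫ := real_inner_comm _ _
      simp only [Function.comp_apply, ContinuousLinearMap.coe_coe,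
        LinearMap.coe_toAffineMap, innerSL_apply_apply, hsym, hinner x θ]
    rwa [h2, Set.preimage_univ] at this
  -- rewrite Lhat as a sum with nonnegative coefficients
  have hL : Lhat = fun θ =>
      (∑ i, (1 / (ν * nd)) * (-f' (ρ θ (xd i))))
      + ∑ i, (1 / (nn : ℝ)) * (ρ θ (xn i) * f' (ρ θ (xn i)) - f (ρ θ (xn i))) := by
    funext θ
    rw [hLhat θ]
    congr 1
    · rw [Finset.mul_sum, Finset.mul_sum]
      apply Finset.sum_congr rfl
      intro i _
      field_simp
    · rw [Finset.mul_sum]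
  rw [hL]
  have hνnd : (0:ℝ) ≤ 1 / (ν * nd) := by positivity
  have hnn' : (0:ℝ) ≤ 1 / (nn : ℝ) := by positivity
  refine ConvexOn.add ?_ ?_
  · refine convexOn_sum' convex_univ Finset.univ _ (fun i _ => ?_)
    simpa [smul_eq_mul] using (hAcomp (xd i)).smul hνnd
  · refine convexOn_sum' convex_univ Finset.univ _ (fun i _ => ?_)
    simpa [smul_eq_mul] using (hBcomp (xn i)).smul hnn'
end

section
/- For the asymmetric power function f_α(ρ) = (ρ^α - 1)/(α(α-1)) with α ∈ (0,1), both g_{f_α}(ρ) = (1-α)ρ^{α-2} ≥ 0 and f_α''(ρ) - g_{f_α}(ρ) = α ρ^{α-2} ≥ 0 hold for all ρ > 0; consequently the f_α-NCE objective for an exponential family is convex in θ. -/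
open RealInnerProductSpace

lemma aux_sum_convex {ι E : Type*} [AddCommMonoid E] [Module ℝ E]
    (s : Finset ι) (f : ι → E → ℝ) (h : ∀ i ∈ s, ConvexOn ℝ Set.univ (f i)) :
    ConvexOn ℝ Set.univ (fun x => ∑ i ∈ s, f i x) := by
  classical
  induction s using Finset.induction_on with
  | empty => simpa using convexOn_const (0:ℝ) convex_univ
  | insert _ _ ha ih =>
      simp only [Finset.sum_insert ha]
      exact (h _ (Finset.mem_insert_self _ _)).add
        (ih fun i hi => h i (Finset.mem_insert_of_mem hi))

lemma aux_convex_exp_inner {p : ℕ} (k c : ℝ) (hc : 0 ≤ c) (v : EuclideanSpace ℝ (Fin p)) :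
    ConvexOn ℝ Set.univ (fun θ : EuclideanSpace ℝ (Fin p) => c * Real.exp (k * ⟪θ, v⟫)) := by
  refine ⟨convex_univ, fun x _ y _ a b ha hb hab => ?_⟩
  have h1 : k * ⟪a • x + b • y, v⟫ = a * (k * ⟪x, v⟫) + b * (k * ⟪y, v⟫) := by
    rw [inner_add_left, real_inner_smul_left, real_inner_smul_left]; ring
  simp only [smul_eq_mul]
  rw [h1]
  have h2 := convexOn_exp.2 (Set.mem_univ (k*⟪x,v⟫)) (Set.mem_univ (k*⟪y,v⟫)) ha hb hab
  simp only [smul_eq_mul] at h2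
  nlinarith [Real.exp_pos (a * (k*⟪x,v⟫) + b * (k*⟪y,v⟫))]

/-- For the asymmetric power generator `f_α(ρ) = (ρ^α - 1)/(α(α-1))` with
`α ∈ (0,1)`, both `g_{f_α}(ρ) = (1-α)ρ^{α-2} ≥ 0` and
`f_α''(ρ) - g_{f_α}(ρ) = αρ^{α-2} ≥ 0` on `ρ > 0`; consequently the
`f_α`-NCE objective for an exponential family is convex in `θ`. -/
theorem falpha_convexity_criterion {X : Type*} {p : ℕ}
    (α : ℝ) (hα : α ∈ Set.Ioo (0 : ℝ) 1)
    (fα : ℝ → ℝ) (hfα : ∀ ρ : ℝ, fα ρ = (ρ ^ α - 1) / (α * (α - 1)))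
    (ψ : X → EuclideanSpace ℝ (Fin p)) (qn : X → ℝ) (hqn : ∀ x, 0 < qn x)
    (ν : ℝ) (hν : 0 < ν)
    {nd nn : ℕ} (hnd : 0 < nd) (hnn : 0 < nn)
    (xd : Fin nd → X) (xn : Fin nn → X)
    (ρmod : EuclideanSpace ℝ (Fin p) → X → ℝ)
    (hρ : ∀ θ x, ρmod θ x = Real.exp ⟪θ, ψ x⟫ / (ν * qn x))
    (Lhat : EuclideanSpace ℝ (Fin p) → ℝ)
    (hLhat : ∀ θ, Lhat θ =
      -(1 / ν) * ((1 / (nd : ℝ)) * ∑ i, deriv fα (ρmod θ (xd i)))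
      + (1 / (nn : ℝ)) *
          ∑ i, (ρmod θ (xn i) * deriv fα (ρmod θ (xn i)) - fα (ρmod θ (xn i)))) :
    (∀ ρ : ℝ, 0 < ρ →
      (-(ρ * deriv (deriv (deriv fα)) ρ + deriv (deriv fα) ρ)
          = (1 - α) * ρ ^ (α - 2) ∧ 0 ≤ (1 - α) * ρ ^ (α - 2)) ∧
      (deriv (deriv fα) ρ
          - (-(ρ * deriv (deriv (deriv fα)) ρ + deriv (deriv fα) ρ))
          = α * ρ ^ (α - 2) ∧ 0 ≤ α * ρ ^ (α - 2))) ∧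
    ConvexOn ℝ Set.univ Lhat := by
  obtain ⟨hα0, hα1⟩ := hα
  have hαne : α ≠ 0 := ne_of_gt hα0
  have hα1ne : α - 1 ≠ 0 := by intro h; rw [sub_eq_zero] at h; linarith
  have h1αne : (1:ℝ) - α ≠ 0 := by intro h; rw [sub_eq_zero] at h; linarith
  have hνne : ν ≠ 0 := hν.ne'
  have hndne : (nd:ℝ) ≠ 0 := Nat.cast_ne_zero.mpr hnd.ne'
  have hnnne : (nn:ℝ) ≠ 0 := Nat.cast_ne_zero.mpr hnn.ne'
  have hF : fα = fun ρ : ℝ => (ρ ^ α - 1) / (α * (α - 1)) := funext hfα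
  -- derivative computations
  have hd1 : ∀ ρ : ℝ, 0 < ρ → deriv fα ρ = ρ ^ (α-1) / (α-1) := by
    intro ρ hρ0
    rw [hF]
    have h := ((Real.hasDerivAt_rpow_const (p := α) (Or.inl hρ0.ne')).sub_const 1).div_const
      (α*(α-1))
    rw [h.deriv]
    field_simp
  have hd2 : ∀ ρ : ℝ, 0 < ρ → deriv (deriv fα) ρ = ρ ^ (α-2) := by
    intro ρ hρ0
    have hev : deriv fα =ᶠ[nhds ρ] fun s => s ^ (α-1) / (α-1) := by
      filter_upwards [Ioi_mem_nhds hρ0] with s hs using hd1 s hs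
    rw [hev.deriv_eq]
    have h := (Real.hasDerivAt_rpow_const (p := α-1) (Or.inl hρ0.ne')).div_const (α-1)
    rw [h.deriv, show α - 1 - 1 = α - 2 by ring, mul_comm, mul_div_assoc,
      div_self hα1ne, mul_one]
  have hd3 : ∀ ρ : ℝ, 0 < ρ → deriv (deriv (deriv fα)) ρ = (α-2) * ρ ^ (α-3) := by
    intro ρ hρ0
    have hev : deriv (deriv fα) =ᶠ[nhds ρ] fun s => s ^ (α-2) := by
      filter_upwards [Ioi_mem_nhds hρ0] with s hs using hd2 s hs
    rw [hev.deriv_eq]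
    have h := Real.hasDerivAt_rpow_const (p := α-2) (x := ρ) (Or.inl hρ0.ne')
    rw [h.deriv, show α - 2 - 1 = α - 3 by ring]
  constructor
  · intro ρ hρ0
    have hmul : ρ * ρ ^ (α-3) = ρ ^ (α-2) := by
      rw [show α - 2 = (α-3) + 1 by ring]
      rw [Real.rpow_add_one hρ0.ne', mul_comm]
    have hg : -(ρ * deriv (deriv (deriv fα)) ρ + deriv (deriv fα) ρ)
        = (1 - α) * ρ ^ (α - 2) := by
      rw [hd2 ρ hρ0, hd3 ρ hρ0]
      linear_combination (2 - α) * hmul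
    refine ⟨⟨hg, mul_nonneg (by linarith) (Real.rpow_nonneg hρ0.le _)⟩, ?_, ?_⟩
    · rw [hg, hd2 ρ hρ0]; ring
    · exact mul_nonneg hα0.le (Real.rpow_nonneg hρ0.le _)
  -- convexity
  have hρpos : ∀ θ x, 0 < ρmod θ x := by
    intro θ x; rw [hρ]
    have := hqn x; positivity
  have hpow : ∀ (θ : EuclideanSpace ℝ (Fin p)) (x : X) (k : ℝ),
      (ρmod θ x) ^ k = Real.exp (-(k * Real.log (ν * qn x))) * Real.exp (k * ⟪θ, ψ x⟫) := by
    intro θ x k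
    have hq := hqn x
    rw [hρ, Real.rpow_def_of_pos (by positivity),
      Real.log_div (Real.exp_ne_zero _) (by positivity), Real.log_exp, ← Real.exp_add]
    congr 1; ring
  have hterm1 : ∀ (θ : EuclideanSpace ℝ (Fin p)) (i : Fin nd),
      deriv fα (ρmod θ (xd i))
        = Real.exp (-((α-1) * Real.log (ν * qn (xd i))))
            * Real.exp ((α-1) * ⟪θ, ψ (xd i)⟫) / (α-1) := by
    intro θ i
    rw [hd1 _ (hρpos θ (xd i)), hpow θ (xd i) (α-1)]
  have hterm2 : ∀ (θ : EuclideanSpace ℝ (Fin p)) (j : Fin nn),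
      ρmod θ (xn j) * deriv fα (ρmod θ (xn j)) - fα (ρmod θ (xn j))
        = Real.exp (-(α * Real.log (ν * qn (xn j))))
            * Real.exp (α * ⟪θ, ψ (xn j)⟫) / α + 1/(α*(α-1)) := by
    intro θ j
    set ρ := ρmod θ (xn j) with hρdef
    have hρ0 : 0 < ρ := hρpos θ (xn j)
    have hmul : ρ * ρ ^ (α-1) = ρ ^ α := by
      nth_rewrite 2 [show α = 1 + (α-1) by ring]
      rw [Real.rpow_add hρ0, Real.rpow_one]
    have key : ρ * (ρ^(α-1)/(α-1)) - (ρ^α - 1)/(α*(α-1)) = ρ^α/α + 1/(α*(α-1)) := by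
      rw [← mul_div_assoc, hmul]
      field_simp
      ring
    rw [hd1 _ hρ0, hfα, key, hpow θ (xn j) α]
  have hG : Lhat = fun θ =>
      (∑ i, (Real.exp (-((α-1) * Real.log (ν * qn (xd i)))) / (ν * nd * (1-α)))
          * Real.exp ((α-1) * ⟪θ, ψ (xd i)⟫))
      + ((∑ j, (Real.exp (-(α * Real.log (ν * qn (xn j)))) / (nn * α))
          * Real.exp (α * ⟪θ, ψ (xn j)⟫)) + 1/(α*(α-1))) := by
    funext θ
    rw [hLhat]
    have s1 : ∑ i, deriv fα (ρmod θ (xd i))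
        = ∑ i, Real.exp (-((α-1) * Real.log (ν * qn (xd i))))
            * Real.exp ((α-1) * ⟪θ, ψ (xd i)⟫) / (α-1) :=
      Finset.sum_congr rfl fun i _ => hterm1 θ i
    have s2 : ∑ j, (ρmod θ (xn j) * deriv fα (ρmod θ (xn j)) - fα (ρmod θ (xn j)))
        = ∑ j, (Real.exp (-(α * Real.log (ν * qn (xn j))))
            * Real.exp (α * ⟪θ, ψ (xn j)⟫) / α + 1/(α*(α-1))) :=
      Finset.sum_congr rfl fun j _ => hterm2 θ j
    rw [s1, s2, Finset.sum_add_distrib, Finset.sum_const, Finset.card_univ,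
      Fintype.card_fin, nsmul_eq_mul, mul_add, Finset.mul_sum, Finset.mul_sum,
      Finset.mul_sum]
    congr 1
    · exact Finset.sum_congr rfl fun i _ => by field_simp; try ring
    · congr 1
      · exact Finset.sum_congr rfl fun j _ => by field_simp; try ring
      · field_simp
  rw [hG]
  have hc1 : ∀ i : Fin nd,
      0 ≤ Real.exp (-((α-1) * Real.log (ν * qn (xd i)))) / (ν * nd * (1-α)) := by
    intro i
    have h1α : (0:ℝ) < 1 - α := by linarith
    have hden : (0:ℝ) < ν * nd * (1-α) := by
      have : (0:ℝ) < (nd:ℝ) := Nat.cast_pos.mpr hnd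
      positivity
    exact div_nonneg (Real.exp_pos _).le hden.le
  have hc2 : ∀ j : Fin nn,
      0 ≤ Real.exp (-(α * Real.log (ν * qn (xn j)))) / (nn * α) := by
    intro j
    have hden : (0:ℝ) < (nn:ℝ) * α := by
      have : (0:ℝ) < (nn:ℝ) := Nat.cast_pos.mpr hnn
      positivity
    exact div_nonneg (Real.exp_pos _).le hden.le
  exact (aux_sum_convex _ _ (fun i _ => aux_convex_exp_inner _ _ (hc1 i) _)).add
    ((aux_sum_convex _ _ (fun j _ => aux_convex_exp_inner _ _ (hc2 j) _)).add
      (convexOn_const _ convex_univ))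
end

section
/- For the log generator f_log(ρ) = ρ log ρ - (ρ+1) log(ρ+1), one has f_log''(ρ) = 1/(ρ(ρ+1)), g_{f_log}(ρ) = 1/(ρ+1)² ≥ 0, and f_log''(ρ) - g_{f_log}(ρ) = 1/(ρ(ρ+1)²) ≥ 0 for all ρ > 0, hence the log-NCE objective for exponential families is convex. -/
open RealInnerProductSpace

noncomputable def Flog : ℝ → ℝ := fun r => r * Real.log r - (r + 1) * Real.log (r + 1)

lemma Flog_hasDerivAt {ρ : ℝ} (h : 0 < ρ) :
    HasDerivAt Flog (Real.log ρ - Real.log (ρ + 1)) ρ := by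
  have h1 : (0:ℝ) < ρ + 1 := by linarith
  have ha : HasDerivAt (fun r : ℝ => r * Real.log r) (Real.log ρ + 1) ρ := by
    have := (hasDerivAt_id ρ).mul (Real.hasDerivAt_log h.ne')
    exact this.congr_deriv (by simp [mul_inv_cancel₀ h.ne'])
  have hg : HasDerivAt (fun r : ℝ => r + 1) 1 ρ := (hasDerivAt_id ρ).add_const 1
  have hb : HasDerivAt (fun r : ℝ => (r + 1) * Real.log (r + 1)) (Real.log (ρ + 1) + 1) ρ := by
    have hc := (Real.hasDerivAt_log h1.ne').comp ρ hg
    have := hg.mul hc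
    exact this.congr_deriv (by simp [mul_inv_cancel₀ h1.ne'])
  exact (ha.sub hb).congr_deriv (by ring)

lemma Flog_deriv {ρ : ℝ} (h : 0 < ρ) :
    deriv Flog ρ = Real.log ρ - Real.log (ρ + 1) := (Flog_hasDerivAt h).deriv

lemma Flog_deriv2 {ρ : ℝ} (h : 0 < ρ) :
    deriv (deriv Flog) ρ = ρ⁻¹ - (ρ + 1)⁻¹ := by
  have h1 : (0:ℝ) < ρ + 1 := by linarith
  have hmem : Set.Ioi (0:ℝ) ∈ nhds ρ := Ioi_mem_nhds h
  have hev : deriv Flog =ᶠ[nhds ρ] fun r => Real.log r - Real.log (r + 1) :=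
    Filter.eventuallyEq_of_mem hmem fun r hr => Flog_deriv hr
  rw [hev.deriv_eq]
  have hg : HasDerivAt (fun r : ℝ => r + 1) 1 ρ := (hasDerivAt_id ρ).add_const 1
  have hc := (Real.hasDerivAt_log h1.ne').comp ρ hg
  have := (Real.hasDerivAt_log h.ne').sub hc
  exact this.deriv.trans (by ring)

lemma Flog_deriv3 {ρ : ℝ} (h : 0 < ρ) :
    deriv (deriv (deriv Flog)) ρ = -(ρ ^ 2)⁻¹ + ((ρ + 1) ^ 2)⁻¹ := by
  have h1 : (0:ℝ) < ρ + 1 := by linarith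
  have hmem : Set.Ioi (0:ℝ) ∈ nhds ρ := Ioi_mem_nhds h
  have hev : deriv (deriv Flog) =ᶠ[nhds ρ] fun r => r⁻¹ - (r + 1)⁻¹ :=
    Filter.eventuallyEq_of_mem hmem fun r hr => Flog_deriv2 hr
  rw [hev.deriv_eq]
  have hg : HasDerivAt (fun r : ℝ => r + 1) 1 ρ := (hasDerivAt_id ρ).add_const 1
  have hc := (hasDerivAt_inv h1.ne').comp ρ hg
  have := (hasDerivAt_inv h.ne').sub hc
  exact this.deriv.trans (by ring)

lemma aux_hconv (c : ℝ) (hc : 0 < c) :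
    ConvexOn ℝ Set.univ (fun t : ℝ => Real.log (Real.exp t + c)) := by
  have hpos : ∀ t : ℝ, 0 < Real.exp t + c := fun t => by positivity
  have hd1 : ∀ t : ℝ, HasDerivAt (fun t => Real.log (Real.exp t + c))
      (Real.exp t / (Real.exp t + c)) t := by
    intro t
    have h1 : HasDerivAt (fun t : ℝ => Real.exp t + c) (Real.exp t) t :=
      (Real.hasDerivAt_exp t).add_const c
    have := (Real.hasDerivAt_log (hpos t).ne').comp t h1
    exact this.congr_deriv (by ring)
  have hderiv1 : deriv (fun t => Real.log (Real.exp t + c))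
      = fun t => Real.exp t / (Real.exp t + c) := funext fun t => (hd1 t).deriv
  have hd2 : ∀ t : ℝ, HasDerivAt (fun t => Real.exp t / (Real.exp t + c))
      ((Real.exp t * (Real.exp t + c) - Real.exp t * Real.exp t) / (Real.exp t + c) ^ 2) t :=
    fun t => (Real.hasDerivAt_exp t).div ((Real.hasDerivAt_exp t).add_const c) (hpos t).ne'
  apply convexOn_univ_of_deriv2_nonneg
  · exact fun t => (hd1 t).differentiableAt
  · rw [hderiv1]; exact fun t => (hd2 t).differentiableAt
  · intro t
    have h2 : deriv^[2] (fun t => Real.log (Real.exp t + c)) t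
        = deriv (deriv (fun t => Real.log (Real.exp t + c))) t := by
      simp [Function.iterate_succ_apply']
    rw [h2, hderiv1, (hd2 t).deriv]
    have heq : (Real.exp t * (Real.exp t + c) - Real.exp t * Real.exp t)
        = Real.exp t * c := by ring
    rw [heq]; positivity

lemma aux_term {E : Type*} [NormedAddCommGroup E] [InnerProductSpace ℝ E]
    (v : E) (c β κ : ℝ) (hc : 0 < c) :
    ConvexOn ℝ Set.univ (fun θ : E =>
      Real.log (Real.exp ⟪θ, v⟫ + c) - β * ⟪θ, v⟫ - κ) := by
  refine ⟨convex_univ, fun x _ y _ a b ha hb hab => ?_⟩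
  have h1 := (aux_hconv c hc).2 (Set.mem_univ ⟪x, v⟫) (Set.mem_univ ⟪y, v⟫) ha hb hab
  simp only [smul_eq_mul] at h1 ⊢
  simp only [inner_add_left, real_inner_smul_left]
  have hb' : b = 1 - a := by linarith
  subst hb'
  ring_nf at h1 ⊢
  linarith [h1]

lemma aux_sum {ι E : Type*} [AddCommGroup E] [Module ℝ E]
    (s : Finset ι) (g : ι → E → ℝ) (h : ∀ i ∈ s, ConvexOn ℝ Set.univ (g i)) :
    ConvexOn ℝ Set.univ (fun θ => ∑ i ∈ s, g i θ) := by
  classical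
  induction s using Finset.cons_induction with
  | empty => simpa using convexOn_const (0:ℝ) convex_univ
  | cons i s hi ih =>
    simp only [Finset.sum_cons]
    exact (h i (Finset.mem_cons_self i s)).add
      (ih fun j hj => h j (Finset.mem_cons.2 (Or.inr hj)))


/-- For the log generator `f_log(ρ) = ρ log ρ - (ρ+1) log(ρ+1)`:
`f''(ρ) = 1/(ρ(ρ+1))`, `g_f(ρ) = 1/(ρ+1)² ≥ 0` and
`f''(ρ) - g_f(ρ) = 1/(ρ(ρ+1)²) ≥ 0` for all `ρ > 0`; hence the log-NCE
objective for exponential families is convex. -/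
theorem flog_convexity_criterion {X : Type*} {p : ℕ}
    (flog : ℝ → ℝ)
    (hflog : ∀ ρ : ℝ, flog ρ = ρ * Real.log ρ - (ρ + 1) * Real.log (ρ + 1))
    (ψ : X → EuclideanSpace ℝ (Fin p)) (qn : X → ℝ) (hqn : ∀ x, 0 < qn x)
    (ν : ℝ) (hν : 0 < ν)
    {nd nn : ℕ} (hnd : 0 < nd) (hnn : 0 < nn)
    (xd : Fin nd → X) (xn : Fin nn → X)
    (ρmod : EuclideanSpace ℝ (Fin p) → X → ℝ)
    (hρ : ∀ θ x, ρmod θ x = Real.exp ⟪θ, ψ x⟫ / (ν * qn x))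
    (Lhat : EuclideanSpace ℝ (Fin p) → ℝ)
    (hLhat : ∀ θ, Lhat θ =
      -(1 / ν) * ((1 / (nd : ℝ)) * ∑ i, deriv flog (ρmod θ (xd i)))
      + (1 / (nn : ℝ)) *
          ∑ i, (ρmod θ (xn i) * deriv flog (ρmod θ (xn i))
                 - flog (ρmod θ (xn i)))) :
    (∀ ρ : ℝ, 0 < ρ →
      deriv (deriv flog) ρ = 1 / (ρ * (ρ + 1)) ∧
      (-(ρ * deriv (deriv (deriv flog)) ρ + deriv (deriv flog) ρ)
          = 1 / (ρ + 1) ^ 2 ∧ (0:ℝ) ≤ 1 / (ρ + 1) ^ 2) ∧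
      (deriv (deriv flog) ρ
          - (-(ρ * deriv (deriv (deriv flog)) ρ + deriv (deriv flog) ρ))
          = 1 / (ρ * (ρ + 1) ^ 2) ∧ (0:ℝ) ≤ 1 / (ρ * (ρ + 1) ^ 2))) ∧
    ConvexOn ℝ Set.univ Lhat := by
  have hF : flog = Flog := funext fun r => by rw [hflog r]; rfl
  constructor
  · intro ρ hρ0
    have h1 : (0:ℝ) < ρ + 1 := by linarith
    rw [hF, Flog_deriv2 hρ0, Flog_deriv3 hρ0]
    refine ⟨by field_simp; try ring, ⟨by field_simp; try ring, by positivity⟩,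
      ⟨by field_simp; try ring, by positivity⟩⟩
  · set T : EuclideanSpace ℝ (Fin p) → ℝ := fun θ =>
      (1 / ν) * ((1 / (nd : ℝ)) * ∑ i,
        (Real.log (Real.exp ⟪θ, ψ (xd i)⟫ + ν * qn (xd i)) - 1 * ⟪θ, ψ (xd i)⟫ - 0))
      + (1 / (nn : ℝ)) * ∑ i,
        (Real.log (Real.exp ⟪θ, ψ (xn i)⟫ + ν * qn (xn i)) - 0 * ⟪θ, ψ (xn i)⟫
          - Real.log (ν * qn (xn i))) with hT
    have hTconv : ConvexOn ℝ Set.univ T := by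
      apply ConvexOn.add
      · have h1 := aux_sum (E := EuclideanSpace ℝ (Fin p)) Finset.univ
          (fun i θ => Real.log (Real.exp ⟪θ, ψ (xd i)⟫ + ν * qn (xd i))
            - 1 * ⟪θ, ψ (xd i)⟫ - 0)
          (fun i _ => aux_term (ψ (xd i)) (ν * qn (xd i)) 1 0 (by have := hqn (xd i); positivity))
        have h2 := (h1.smul (by positivity : (0:ℝ) ≤ 1 / (nd : ℝ))).smul
          (by positivity : (0:ℝ) ≤ 1 / ν)
        simpa [smul_eq_mul] using h2
      · have h1 := aux_sum (E := EuclideanSpace ℝ (Fin p)) Finset.univ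
          (fun i θ => Real.log (Real.exp ⟪θ, ψ (xn i)⟫ + ν * qn (xn i))
            - 0 * ⟪θ, ψ (xn i)⟫ - Real.log (ν * qn (xn i)))
          (fun i _ => aux_term (ψ (xn i)) (ν * qn (xn i)) 0 (Real.log (ν * qn (xn i)))
            (by have := hqn (xn i); positivity))
        have h2 := h1.smul (by positivity : (0:ℝ) ≤ 1 / (nn : ℝ))
        simpa [smul_eq_mul] using h2
    have hLT : Lhat = T := by
      funext θ
      have key : ∀ x : X,
          deriv flog (ρmod θ x) = ⟪θ, ψ x⟫ - Real.log (Real.exp ⟪θ, ψ x⟫ + ν * qn x) ∧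
          ρmod θ x * deriv flog (ρmod θ x) - flog (ρmod θ x)
            = Real.log (Real.exp ⟪θ, ψ x⟫ + ν * qn x) - Real.log (ν * qn x) := by
        intro x
        have hc : (0:ℝ) < ν * qn x := mul_pos hν (hqn x)
        have hec : (0:ℝ) < Real.exp ⟪θ, ψ x⟫ + ν * qn x := by positivity
        have hρpos : 0 < ρmod θ x := by rw [hρ θ x]; positivity
        have hlogρ : Real.log (ρmod θ x) = ⟪θ, ψ x⟫ - Real.log (ν * qn x) := by
          rw [hρ θ x, Real.log_div (Real.exp_ne_zero _) hc.ne', Real.log_exp]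
        have hρ1 : ρmod θ x + 1 = (Real.exp ⟪θ, ψ x⟫ + ν * qn x) / (ν * qn x) := by
          rw [hρ θ x]; field_simp
          rw [eq_div_iff (hqn x).ne', add_mul, div_mul_cancel₀ _ (hqn x).ne']
        have hlogρ1 : Real.log (ρmod θ x + 1)
            = Real.log (Real.exp ⟪θ, ψ x⟫ + ν * qn x) - Real.log (ν * qn x) := by
          rw [hρ1, Real.log_div hec.ne' hc.ne']
        constructor
        · rw [hF, Flog_deriv hρpos, hlogρ, hlogρ1]; ring
        · rw [hF, Flog_deriv hρpos]
          simp only [Flog]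
          rw [← hlogρ1]; ring
      rw [hLhat θ, hT]
      rw [Finset.sum_congr rfl fun i _ => (key (xd i)).1,
          Finset.sum_congr rfl fun i _ => (key (xn i)).2]
      simp only [one_mul, zero_mul, Finset.sum_sub_distrib, Finset.sum_const_zero]
      ring
    rw [hLT]; exact hTconv
end

section
/- Convexity of α-CentNCE via LogSumExp: for α ∈ (0,1) and an exponential family model, θ ↦ log L_α^cent(θ) = -log(1-α) + log E_{q_d}[exp((α-1)⟨θ, ψ⟩ + (1-α) log q_n)] + ((1-α)/α) log E_{q_n}[exp(α⟨θ, ψ⟩ - α log q_n)] is convex, since each log-expectation-of-exponential of an affine function of θ is convex. -/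
open MeasureTheory RealInnerProductSpace

private lemma holder_geom {X : Type*} [MeasurableSpace X] (μ : Measure X)
    {f g : X → ℝ} (hf0 : ∀ x, 0 ≤ f x) (hg0 : ∀ x, 0 ≤ g x)
    (hf : Integrable f μ) (hg : Integrable g μ)
    {t s : ℝ} (ht : 0 < t) (hs : 0 < s) (hts : t + s = 1) :
    ∫ x, (f x) ^ t * (g x) ^ s ∂μ ≤ (∫ x, f x ∂μ) ^ t * (∫ x, g x ∂μ) ^ s := by
  have ht1 : t < 1 := by linarith
  have hIf : 0 ≤ ∫ x, f x ∂μ := integral_nonneg hf0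
  have hIg : 0 ≤ ∫ x, g x ∂μ := integral_nonneg hg0
  have hconj : (1 / t).HolderConjugate (1 / s) := by
    rw [Real.holderConjugate_iff]
    constructor
    · rw [lt_div_iff₀ ht]; linarith
    · rw [one_div, inv_inv, one_div, inv_inv]; exact hts
  have hFm : AEMeasurable (fun x => ENNReal.ofReal (f x)) μ := hf.aemeasurable.ennreal_ofReal
  have hGm : AEMeasurable (fun x => ENNReal.ofReal (g x)) μ := hg.aemeasurable.ennreal_ofReal
  have key := ENNReal.lintegral_mul_le_Lp_mul_Lq μ hconj
    (f := fun x => (ENNReal.ofReal (f x)) ^ t) (g := fun x => (ENNReal.ofReal (g x)) ^ s)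
    (hFm.pow aemeasurable_const) (hGm.pow aemeasurable_const)
  have hsimpf : ∀ x, ((ENNReal.ofReal (f x)) ^ t) ^ (1 / t) = ENNReal.ofReal (f x) := by
    intro x
    rw [← ENNReal.rpow_mul, mul_one_div_cancel ht.ne', ENNReal.rpow_one]
  have hsimpg : ∀ x, ((ENNReal.ofReal (g x)) ^ s) ^ (1 / s) = ENNReal.ofReal (g x) := by
    intro x
    rw [← ENNReal.rpow_mul, mul_one_div_cancel hs.ne', ENNReal.rpow_one]
  simp only [Pi.mul_apply, hsimpf, hsimpg, one_div_one_div] at key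
  have hlf : ∫⁻ x, ENNReal.ofReal (f x) ∂μ = ENNReal.ofReal (∫ x, f x ∂μ) :=
    (ofReal_integral_eq_lintegral_ofReal hf (Filter.Eventually.of_forall hf0)).symm
  have hlg : ∫⁻ x, ENNReal.ofReal (g x) ∂μ = ENNReal.ofReal (∫ x, g x ∂μ) :=
    (ofReal_integral_eq_lintegral_ofReal hg (Filter.Eventually.of_forall hg0)).symm
  rw [hlf, hlg] at key
  have hmeas : AEStronglyMeasurable (fun x => f x ^ t * g x ^ s) μ :=
    ((hf.aemeasurable.pow aemeasurable_const).mul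
      (hg.aemeasurable.pow aemeasurable_const)).aestronglyMeasurable
  rw [integral_eq_lintegral_of_nonneg_ae
    (Filter.Eventually.of_forall fun x =>
      mul_nonneg (Real.rpow_nonneg (hf0 x) t) (Real.rpow_nonneg (hg0 x) s)) hmeas]
  have hpt : ∀ x, ENNReal.ofReal (f x ^ t * g x ^ s)
      = (ENNReal.ofReal (f x)) ^ t * (ENNReal.ofReal (g x)) ^ s := by
    intro x
    rw [ENNReal.ofReal_mul (Real.rpow_nonneg (hf0 x) t),
      ENNReal.ofReal_rpow_of_nonneg (hf0 x) ht.le,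
      ENNReal.ofReal_rpow_of_nonneg (hg0 x) hs.le]
  simp only [hpt]
  have hrhs : (ENNReal.ofReal (∫ x, f x ∂μ)) ^ t * (ENNReal.ofReal (∫ x, g x ∂μ)) ^ s
      = ENNReal.ofReal ((∫ x, f x ∂μ) ^ t * (∫ x, g x ∂μ) ^ s) := by
    rw [ENNReal.ofReal_mul (Real.rpow_nonneg hIf t),
      ENNReal.ofReal_rpow_of_nonneg hIf ht.le, ENNReal.ofReal_rpow_of_nonneg hIg hs.le]
  rw [hrhs] at key
  calc (∫⁻ x, (ENNReal.ofReal (f x)) ^ t * (ENNReal.ofReal (g x)) ^ s ∂μ).toReal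
      ≤ (ENNReal.ofReal ((∫ x, f x ∂μ) ^ t * (∫ x, g x ∂μ) ^ s)).toReal :=
        ENNReal.toReal_mono ENNReal.ofReal_ne_top key
    _ = (∫ x, f x ∂μ) ^ t * (∫ x, g x ∂μ) ^ s :=
        ENNReal.toReal_ofReal (mul_nonneg (Real.rpow_nonneg hIf t) (Real.rpow_nonneg hIg s))

private lemma convexOn_log_integral_exp {X : Type*} [MeasurableSpace X] {p : ℕ}
    (μ : Measure X) (c : ℝ) (d : X → ℝ) (ψ : X → EuclideanSpace ℝ (Fin p))
    (w : X → ℝ) (hw : ∀ x, 0 ≤ w x)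
    (hint : ∀ θ : EuclideanSpace ℝ (Fin p),
      Integrable (fun x => Real.exp (c * ⟪θ, ψ x⟫ + d x) * w x) μ)
    (hpos : ∀ θ : EuclideanSpace ℝ (Fin p),
      0 < ∫ x, Real.exp (c * ⟪θ, ψ x⟫ + d x) * w x ∂μ) :
    ConvexOn ℝ Set.univ (fun θ : EuclideanSpace ℝ (Fin p) =>
      Real.log (∫ x, Real.exp (c * ⟪θ, ψ x⟫ + d x) * w x ∂μ)) := by
  refine ⟨convex_univ, ?_⟩
  intro θ1 _ θ2 _ t s ht hs hts
  rcases eq_or_lt_of_le ht with h | ht'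
  · have hs1 : s = 1 := by linarith
    simp [← h, hs1]
  rcases eq_or_lt_of_le hs with h | hs'
  · have ht1 : t = 1 := by linarith
    simp [← h, ht1]
  have hpt : ∀ x, Real.exp (c * ⟪t • θ1 + s • θ2, ψ x⟫ + d x) * w x
      = (Real.exp (c * ⟪θ1, ψ x⟫ + d x) * w x) ^ t
        * (Real.exp (c * ⟪θ2, ψ x⟫ + d x) * w x) ^ s := by
    intro x
    have hinner : ⟪t • θ1 + s • θ2, ψ x⟫ = t * ⟪θ1, ψ x⟫ + s * ⟪θ2, ψ x⟫ := by
      rw [inner_add_left, real_inner_smul_left, real_inner_smul_left]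
    have hexp : c * ⟪t • θ1 + s • θ2, ψ x⟫ + d x
        = (c * ⟪θ1, ψ x⟫ + d x) * t + (c * ⟪θ2, ψ x⟫ + d x) * s := by
      rw [hinner]; linear_combination (d x) * hts.symm
    have hw1 : w x ^ t * w x ^ s = w x := by
      rw [← Real.rpow_add' (hw x) (by rw [hts]; norm_num), hts, Real.rpow_one]
    rw [hexp, Real.exp_add, Real.exp_mul, Real.exp_mul,
      Real.mul_rpow (Real.exp_pos _).le (hw x), Real.mul_rpow (Real.exp_pos _).le (hw x),
      mul_mul_mul_comm, hw1]
  have hle : ∫ x, Real.exp (c * ⟪t • θ1 + s • θ2, ψ x⟫ + d x) * w x ∂μ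
      ≤ (∫ x, Real.exp (c * ⟪θ1, ψ x⟫ + d x) * w x ∂μ) ^ t
        * (∫ x, Real.exp (c * ⟪θ2, ψ x⟫ + d x) * w x ∂μ) ^ s := by
    calc ∫ x, Real.exp (c * ⟪t • θ1 + s • θ2, ψ x⟫ + d x) * w x ∂μ
        = ∫ x, (Real.exp (c * ⟪θ1, ψ x⟫ + d x) * w x) ^ t
            * (Real.exp (c * ⟪θ2, ψ x⟫ + d x) * w x) ^ s ∂μ :=
          integral_congr_ae (Filter.Eventually.of_forall hpt)
      _ ≤ _ := holder_geom μ (fun x => mul_nonneg (Real.exp_pos _).le (hw x))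
          (fun x => mul_nonneg (Real.exp_pos _).le (hw x)) (hint θ1) (hint θ2) ht' hs' hts
  have hlog := Real.log_le_log (hpos _) hle
  rw [Real.log_mul (Real.rpow_pos_of_pos (hpos θ1) t).ne' (Real.rpow_pos_of_pos (hpos θ2) s).ne',
    Real.log_rpow (hpos θ1), Real.log_rpow (hpos θ2)] at hlog
  simpa [smul_eq_mul] using hlog

/-- Convexity of α-CentNCE via LogSumExp: for `α ∈ (0,1)` and an exponential
family model, `θ ↦ log L_α^cent(θ)` equals
`-log(1-α) + log E_{q_d}[exp((α-1)⟪θ,ψ⟫ + (1-α)log q_n)]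
 + ((1-α)/α) log E_{q_n}[exp(α⟪θ,ψ⟫ - α log q_n)]`
and is convex, each log-expectation-of-exponential of an affine function of `θ`
being convex. -/
theorem centNCE_log_convexity {X : Type*} [MeasurableSpace X] {p : ℕ}
    (μ : Measure X) (α : ℝ) (hα : α ∈ Set.Ioo (0 : ℝ) 1)
    (ψ : X → EuclideanSpace ℝ (Fin p))
    (qd qn : X → ℝ) (hqd : ∀ x, 0 ≤ qd x) (hqn : ∀ x, 0 < qn x)
    (hqd1 : ∫ x, qd x ∂μ = 1) (hqn1 : ∫ x, qn x ∂μ = 1)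
    (r : EuclideanSpace ℝ (Fin p) → X → ℝ)
    (hr : ∀ θ x, r θ x = Real.exp ⟪θ, ψ x⟫ / qn x)
    (Lcent : EuclideanSpace ℝ (Fin p) → ℝ)
    (hLcent : ∀ θ, Lcent θ = (1 / (1 - α)) *
      (∫ x, (r θ x) ^ (α - 1) * qd x ∂μ) *
      (∫ x, (r θ x) ^ α * qn x ∂μ) ^ ((1 - α) / α))
    -- finiteness and positivity of all expectations
    (hint1 : ∀ θ, Integrable (fun x => (r θ x) ^ (α - 1) * qd x) μ)
    (hint2 : ∀ θ, Integrable (fun x => (r θ x) ^ α * qn x) μ)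
    (hpos1 : ∀ θ, 0 < ∫ x, (r θ x) ^ (α - 1) * qd x ∂μ)
    (hpos2 : ∀ θ, 0 < ∫ x, (r θ x) ^ α * qn x ∂μ) :
    (∀ θ, Real.log (Lcent θ)
        = -Real.log (1 - α)
          + Real.log (∫ x,
              Real.exp ((α - 1) * ⟪θ, ψ x⟫ + (1 - α) * Real.log (qn x)) * qd x ∂μ)
          + ((1 - α) / α) * Real.log (∫ x,
              Real.exp (α * ⟪θ, ψ x⟫ - α * Real.log (qn x)) * qn x ∂μ)) ∧
    ConvexOn ℝ Set.univ (fun θ => Real.log (Lcent θ)) := by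
  obtain ⟨hα0, hα1⟩ := hα
  have h1α : 0 < 1 - α := by linarith
  have hrpos : ∀ θ x, 0 < r θ x := fun θ x => by
    rw [hr]; exact div_pos (Real.exp_pos _) (hqn x)
  have hlogr : ∀ θ x, Real.log (r θ x) = ⟪θ, ψ x⟫ - Real.log (qn x) := by
    intro θ x
    rw [hr, Real.log_div (Real.exp_ne_zero _) (hqn x).ne', Real.log_exp]
  have heq1 : ∀ θ x, (r θ x) ^ (α - 1) * qd x
      = Real.exp ((α - 1) * ⟪θ, ψ x⟫ + (1 - α) * Real.log (qn x)) * qd x := by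
    intro θ x
    rw [Real.rpow_def_of_pos (hrpos θ x), hlogr]
    congr 2
    ring
  have heq2 : ∀ θ x, (r θ x) ^ α * qn x
      = Real.exp (α * ⟪θ, ψ x⟫ - α * Real.log (qn x)) * qn x := by
    intro θ x
    rw [Real.rpow_def_of_pos (hrpos θ x), hlogr]
    congr 2
    ring
  have hI1 : ∀ θ, ∫ x, (r θ x) ^ (α - 1) * qd x ∂μ
      = ∫ x, Real.exp ((α - 1) * ⟪θ, ψ x⟫ + (1 - α) * Real.log (qn x)) * qd x ∂μ :=
    fun θ => integral_congr_ae (Filter.Eventually.of_forall (heq1 θ))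
  have hI2 : ∀ θ, ∫ x, (r θ x) ^ α * qn x ∂μ
      = ∫ x, Real.exp (α * ⟪θ, ψ x⟫ - α * Real.log (qn x)) * qn x ∂μ :=
    fun θ => integral_congr_ae (Filter.Eventually.of_forall (heq2 θ))
  have part1 : ∀ θ, Real.log (Lcent θ)
        = -Real.log (1 - α)
          + Real.log (∫ x,
              Real.exp ((α - 1) * ⟪θ, ψ x⟫ + (1 - α) * Real.log (qn x)) * qd x ∂μ)
          + ((1 - α) / α) * Real.log (∫ x,
              Real.exp (α * ⟪θ, ψ x⟫ - α * Real.log (qn x)) * qn x ∂μ) := by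
    intro θ
    rw [hLcent, Real.log_mul
        (mul_ne_zero (by positivity) (hpos1 θ).ne')
        (Real.rpow_pos_of_pos (hpos2 θ) _).ne',
      Real.log_mul (by positivity) (hpos1 θ).ne',
      Real.log_rpow (hpos2 θ), hI1, hI2, one_div, Real.log_inv]
  refine ⟨part1, ?_⟩
  have c1 : ConvexOn ℝ Set.univ (fun θ : EuclideanSpace ℝ (Fin p) =>
      Real.log (∫ x, Real.exp ((α - 1) * ⟪θ, ψ x⟫ + (1 - α) * Real.log (qn x)) * qd x ∂μ)) :=
    convexOn_log_integral_exp μ (α - 1) (fun x => (1 - α) * Real.log (qn x)) ψ qd hqd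
      (fun θ => (hint1 θ).congr (Filter.Eventually.of_forall (heq1 θ)))
      (fun θ => (hI1 θ) ▸ hpos1 θ)
  have heq2' : ∀ (θ : EuclideanSpace ℝ (Fin p)) x,
      Real.exp (α * ⟪θ, ψ x⟫ + -(α * Real.log (qn x))) * qn x
        = Real.exp (α * ⟪θ, ψ x⟫ - α * Real.log (qn x)) * qn x := by
    intro θ x; rw [← sub_eq_add_neg]
  have c2 : ConvexOn ℝ Set.univ (fun θ : EuclideanSpace ℝ (Fin p) =>
      Real.log (∫ x, Real.exp (α * ⟪θ, ψ x⟫ - α * Real.log (qn x)) * qn x ∂μ)) := by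
    have := convexOn_log_integral_exp μ α (fun x => -(α * Real.log (qn x))) ψ qn
      (fun x => (hqn x).le)
      (fun θ => ((hint2 θ).congr (Filter.Eventually.of_forall (heq2 θ))).congr
        (Filter.Eventually.of_forall fun x => (heq2' θ x).symm))
      (fun θ => by
        rw [integral_congr_ae (Filter.Eventually.of_forall (heq2' θ))]
        exact (hI2 θ) ▸ hpos2 θ)
    convert this using 2 with θ
    exact congrArg Real.log (integral_congr_ae (Filter.Eventually.of_forall (heq2' θ))).symm
  have hfun : (fun θ => Real.log (Lcent θ))
      = fun θ : EuclideanSpace ℝ (Fin p) =>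
          (-Real.log (1 - α)
          + Real.log (∫ x,
              Real.exp ((α - 1) * ⟪θ, ψ x⟫ + (1 - α) * Real.log (qn x)) * qd x ∂μ))
          + ((1 - α) / α) * Real.log (∫ x,
              Real.exp (α * ⟪θ, ψ x⟫ - α * Real.log (qn x)) * qn x ∂μ) := by
    funext θ
    rw [part1 θ]
  rw [hfun]
  have hc : (0:ℝ) ≤ (1 - α) / α := by positivity
  exact ((convexOn_const _ convex_univ).add c1).add (c2.smul hc)
end

section
/- Second-order expansion of empirical f-CondNCE: for Ĉ_f(θ,ε) := E_{q̂_d(x) q̂_s(v)}[-f'(r) + r^{-1} f'(r^{-1}) - f(r^{-1})] with r = φ_θ(x)/φ_θ(x+εv), one has Ĉ_f(θ,0) = -f(1), ∂_ε Ĉ_f(θ,ε)|_{ε=0} = 2 f''(1) E_{q̂_d q̂_s}[∇_x log φ_θ(x)ᵀ v], and ∂²_ε Ĉ_f(θ,ε)|_{ε=0} = f''(1)(2 E[vᵀ ∇²_x log φ_θ(x) v] + E[(∇_x log φ_θ(x)ᵀ v)²]). -/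
open RealInnerProductSpace

/-- Second-order expansion of the empirical f-CondNCE objective
`Ĉ_f(θ,ε) = E_{q̂_d q̂_s}[-f'(r) + r⁻¹ f'(r⁻¹) - f(r⁻¹)]` with
`r = φ(x)/φ(x+εv)`:
`Ĉ(0) = -f(1)`, `∂_ε Ĉ(0) = 2 f''(1) E[∇log φ(x)ᵀ v]`, and
`∂²_ε Ĉ(0) = f''(1)(2 E[vᵀ ∇²log φ(x) v] + E[(∇log φ(x)ᵀ v)²])`. -/
theorem condNCE_second_order_expansion {d : ℕ}
    (φ : EuclideanSpace ℝ (Fin d) → ℝ) (hφpos : ∀ x, 0 < φ x)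
    (hφ : ContDiff ℝ 2 φ)
    (f : ℝ → ℝ) (hf : ContDiff ℝ 3 f)
    -- gradient and Hessian of log φ
    (glog : EuclideanSpace ℝ (Fin d) → EuclideanSpace ℝ (Fin d))
    (hglog : ∀ x, HasGradientAt (fun y => Real.log (φ y)) (glog x) x)
    (Hess : EuclideanSpace ℝ (Fin d) →
      EuclideanSpace ℝ (Fin d) →L[ℝ] EuclideanSpace ℝ (Fin d))
    (hHess : ∀ x, HasFDerivAt glog (Hess x) x)
    -- empirical samples of data points and slicing vectors
    {nd ns : ℕ} (hnd : 0 < nd) (hns : 0 < ns)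
    (x : Fin nd → EuclideanSpace ℝ (Fin d))
    (v : Fin ns → EuclideanSpace ℝ (Fin d))
    -- the ratio and the empirical objective
    (r : Fin nd → Fin ns → ℝ → ℝ)
    (hr : ∀ i j ε, r i j ε = φ (x i) / φ (x i + ε • v j))
    (C : ℝ → ℝ)
    (hC : ∀ ε, C ε = (1 / ((nd : ℝ) * ns)) * ∑ i, ∑ j,
      (-(deriv f (r i j ε)) + (r i j ε)⁻¹ * deriv f ((r i j ε)⁻¹)
        - f ((r i j ε)⁻¹))) :
    C 0 = -f 1 ∧
    deriv C 0 = 2 * deriv (deriv f) 1 *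
      ((1 / ((nd : ℝ) * ns)) * ∑ i, ∑ j, ⟪glog (x i), v j⟫) ∧
    deriv (deriv C) 0 = deriv (deriv f) 1 *
      (2 * ((1 / ((nd : ℝ) * ns)) * ∑ i, ∑ j, ⟪Hess (x i) (v j), v j⟫)
        + (1 / ((nd : ℝ) * ns)) * ∑ i, ∑ j, ⟪glog (x i), v j⟫ ^ 2) := by
  -- derivatives of f
  set g2 : ℝ → ℝ := deriv f with hg2def
  set g3 : ℝ → ℝ := deriv g2 with hg3def
  have hf' : ContDiff ℝ 2 g2 := by
    have h := contDiff_succ_iff_deriv.mp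
      (show ContDiff ℝ (2+1) f from by norm_num at hf ⊢; exact hf)
    exact h.2.2
  have hfd : Differentiable ℝ f := by
    have h := contDiff_succ_iff_deriv.mp
      (show ContDiff ℝ (2+1) f from by norm_num at hf ⊢; exact hf)
    exact h.1
  have hf'' : ContDiff ℝ 1 g3 := by
    have h := contDiff_succ_iff_deriv.mp
      (show ContDiff ℝ (1+1) g2 from by norm_num at hf' ⊢; exact hf')
    exact h.2.2
  have hg2d : Differentiable ℝ g2 := hf'.differentiable (by norm_num)
  have hg3d : Differentiable ℝ g3 := hf''.differentiable (by norm_num)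
  have hDf : ∀ t, HasDerivAt f (g2 t) t := fun t => (hfd t).hasDerivAt
  have hDg2 : ∀ t, HasDerivAt g2 (g3 t) t := fun t => (hg2d t).hasDerivAt
  have hDg3 : ∀ t, HasDerivAt g3 (deriv g3 t) t := fun t => (hg3d t).hasDerivAt
  -- the scalar profile G and its derivative G1
  set G : ℝ → ℝ := fun t => -g2 (Real.exp (-t)) + Real.exp t * g2 (Real.exp t)
      - f (Real.exp t) with hGdef
  set G1 : ℝ → ℝ := fun t => Real.exp (-t) * g3 (Real.exp (-t))
      + Real.exp (2*t) * g3 (Real.exp t) with hG1def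
  have hexp : ∀ t : ℝ, HasDerivAt Real.exp (Real.exp t) t := Real.hasDerivAt_exp
  have hexpneg : ∀ t : ℝ, HasDerivAt (fun s => Real.exp (-s)) (-Real.exp (-t)) t := by
    intro t
    have := (hexp (-t)).comp t (hasDerivAt_neg t)
    exact this.congr_deriv (by ring)
  have hexp2 : ∀ t : ℝ, HasDerivAt (fun s => Real.exp (2*s)) (2 * Real.exp (2*t)) t := by
    intro t
    have h1 : HasDerivAt (fun s : ℝ => 2*s) 2 t := by
      simpa using (hasDerivAt_id t).const_mul (2:ℝ)
    have := (hexp (2*t)).comp t h1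
    exact this.congr_deriv (by ring)
  have hDG : ∀ t, HasDerivAt G (G1 t) t := by
    intro t
    have h1 : HasDerivAt (fun s => -g2 (Real.exp (-s)))
        (Real.exp (-t) * g3 (Real.exp (-t))) t := by
      have := ((hDg2 (Real.exp (-t))).comp t (hexpneg t)).neg
      exact this.congr_deriv (by ring)
    have h2 : HasDerivAt (fun s => Real.exp s * g2 (Real.exp s))
        (Real.exp t * g2 (Real.exp t) + Real.exp (2*t) * g3 (Real.exp t)) t := by
      have := (hexp t).mul ((hDg2 (Real.exp t)).comp t (hexp t))
      refine this.congr_deriv ?_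
      simp only [Function.comp_apply]
      rw [two_mul, Real.exp_add]
      ring
    have h3 : HasDerivAt (fun s => f (Real.exp s)) (g2 (Real.exp t) * Real.exp t) t :=
      (hDf (Real.exp t)).comp t (hexp t)
    have := (h1.add h2).sub h3
    refine this.congr_deriv ?_
    simp only [hG1def]
    ring
  have hDG1 : HasDerivAt G1 (g3 1) 0 := by
    have h1 : HasDerivAt (fun s => Real.exp (-s) * g3 (Real.exp (-s)))
        (-g3 1 - deriv g3 1) 0 := by
      have := (hexpneg 0).mul ((hDg3 (Real.exp (-0))).comp 0 (hexpneg 0))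
      simp only [Function.comp_apply, neg_zero, Real.exp_zero] at this ⊢
      exact this.congr_deriv (by ring)
    have h2 : HasDerivAt (fun s => Real.exp (2*s) * g3 (Real.exp s))
        (2 * g3 1 + deriv g3 1) 0 := by
      have := (hexp2 0).mul ((hDg3 (Real.exp 0)).comp 0 (hexp 0))
      simp only [Function.comp_apply, mul_zero, Real.exp_zero] at this ⊢
      exact this.congr_deriv (by ring)
    have := h1.add h2
    refine this.congr_deriv ?_
    ring
  -- the per-sample exponent u and its first derivative U1
  set u : Fin nd → Fin ns → ℝ → ℝ :=
    fun i j ε => Real.log (φ (x i + ε • v j)) - Real.log (φ (x i)) with hudef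
  set U1 : Fin nd → Fin ns → ℝ → ℝ :=
    fun i j ε => ⟪glog (x i + ε • v j), v j⟫ with hU1def
  have hpath : ∀ (i : Fin nd) (j : Fin ns) (ε : ℝ),
      HasDerivAt (fun s : ℝ => x i + s • v j) (v j) ε := by
    intro i j ε
    have h := ((hasDerivAt_id ε).smul_const (v j)).const_add (x i)
    simpa using h
  have hu0 : ∀ i j, u i j 0 = 0 := by
    intro i j; simp [hudef]
  have hDu : ∀ (i : Fin nd) (j : Fin ns) (ε : ℝ), HasDerivAt (u i j) (U1 i j ε) ε := by
    intro i j ε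
    have h := ((hglog (x i + ε • v j)).hasFDerivAt.comp_hasDerivAt ε (hpath i j ε)).sub_const
      (Real.log (φ (x i)))
    simpa [hudef, hU1def, InnerProductSpace.toDual_apply_apply] using h
  have hDU1 : ∀ (i : Fin nd) (j : Fin ns),
      HasDerivAt (U1 i j) ⟪Hess (x i) (v j), v j⟫ 0 := by
    intro i j
    have hg : HasDerivAt (fun s : ℝ => glog (x i + s • v j)) (Hess (x i) (v j)) 0 := by
      have h0 : x i + (0:ℝ) • v j = x i := by simp
      exact (hHess (x i)).comp_hasDerivAt_of_eq 0 (hpath i j 0) h0.symm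
    have h := hg.inner ℝ (hasDerivAt_const (0:ℝ) (v j))
    simpa [hU1def] using h
  -- rewrite C
  have hrexp : ∀ i j ε, r i j ε = Real.exp (-(u i j ε)) := by
    intro i j ε
    rw [hr, hudef]
    simp only [neg_sub, Real.exp_sub, Real.exp_log (hφpos _), Real.exp_log (hφpos _)]
  have hCu : ∀ ε, C ε = (1 / ((nd : ℝ) * ns)) * ∑ i, ∑ j, G (u i j ε) := by
    intro ε
    rw [hC]
    congr 1
    refine Finset.sum_congr rfl fun i _ => Finset.sum_congr rfl fun j _ => ?_
    rw [hrexp i j ε]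
    have hinv : (Real.exp (-(u i j ε)))⁻¹ = Real.exp (u i j ε) := by
      rw [Real.exp_neg, inv_inv]
    rw [hinv]
  have hCfun : C = fun ε => (1 / ((nd : ℝ) * ns)) * ∑ i, ∑ j, G (u i j ε) :=
    funext hCu
  have hN : ((nd : ℝ) * ns) ≠ 0 := by positivity
  -- part 1
  have part1 : C 0 = -f 1 := by
    rw [hCu 0]
    have : ∀ (i : Fin nd) (j : Fin ns), G (u i j 0) = -f 1 := by
      intro i j
      rw [hu0]
      simp [hGdef]
    simp only [this, Finset.sum_const, Finset.card_univ, Fintype.card_fin, nsmul_eq_mul]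
    field_simp
  -- derivative of C everywhere
  have hDC : ∀ ε, HasDerivAt C
      ((1 / ((nd : ℝ) * ns)) * ∑ i, ∑ j, G1 (u i j ε) * U1 i j ε) ε := by
    intro ε
    rw [hCfun]
    refine HasDerivAt.const_mul _ ?_
    refine HasDerivAt.fun_sum fun i _ => ?_
    refine HasDerivAt.fun_sum fun j _ => ?_
    exact (hDG (u i j ε)).comp ε (hDu i j ε)
  have hderivC : deriv C = fun ε =>
      (1 / ((nd : ℝ) * ns)) * ∑ i, ∑ j, G1 (u i j ε) * U1 i j ε :=
    funext fun ε => (hDC ε).deriv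
  -- part 2
  have part2 : deriv C 0 = 2 * g3 1 *
      ((1 / ((nd : ℝ) * ns)) * ∑ i, ∑ j, ⟪glog (x i), v j⟫) := by
    rw [hderivC]
    have hG10 : G1 0 = 2 * g3 1 := by simp [hG1def]; ring
    have : ∀ (i : Fin nd) (j : Fin ns),
        G1 (u i j 0) * U1 i j 0 = 2 * g3 1 * ⟪glog (x i), v j⟫ := by
      intro i j
      rw [hu0, hG10]
      simp [hU1def]
    simp only [this]
    simp only [← Finset.mul_sum]
    ring
  -- part 3
  have hDG1u : ∀ (i : Fin nd) (j : Fin ns),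
      HasDerivAt (fun ε => G1 (u i j ε)) (g3 1 * U1 i j 0) 0 := by
    intro i j
    have h : HasDerivAt G1 (g3 1) (u i j 0) := by rw [hu0]; exact hDG1
    exact h.comp 0 (hDu i j 0)
  have hDD : HasDerivAt (deriv C)
      ((1 / ((nd : ℝ) * ns)) * ∑ i, ∑ j,
        (g3 1 * U1 i j 0 * U1 i j 0 + G1 (u i j 0) * ⟪Hess (x i) (v j), v j⟫)) 0 := by
    rw [hderivC]
    refine HasDerivAt.const_mul _ ?_
    refine HasDerivAt.fun_sum fun i _ => ?_
    refine HasDerivAt.fun_sum fun j _ => ?_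
    exact (hDG1u i j).mul (hDU1 i j)
  have part3 : deriv (deriv C) 0 = g3 1 *
      (2 * ((1 / ((nd : ℝ) * ns)) * ∑ i, ∑ j, ⟪Hess (x i) (v j), v j⟫)
        + (1 / ((nd : ℝ) * ns)) * ∑ i, ∑ j, ⟪glog (x i), v j⟫ ^ 2) := by
    rw [hDD.deriv]
    have hG10 : G1 0 = 2 * g3 1 := by simp [hG1def]; ring
    have key : ∀ (i : Fin nd) (j : Fin ns),
        g3 1 * U1 i j 0 * U1 i j 0 + G1 (u i j 0) * ⟪Hess (x i) (v j), v j⟫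
        = g3 1 * ⟪glog (x i), v j⟫ ^ 2 + 2 * g3 1 * ⟪Hess (x i) (v j), v j⟫ := by
      intro i j
      rw [hu0, hG10]
      have : U1 i j 0 = ⟪glog (x i), v j⟫ := by simp [hU1def]
      rw [this]; ring
    simp only [key]
    simp only [Finset.sum_add_distrib, ← Finset.mul_sum]
    ring
  exact ⟨part1, part2, part3⟩
end

section
/- Smoothness of f-NCE under bounded statistics: if ‖ψ(x)‖_∞ ≤ ψ_max for all x and the quantities M_d := sup_ρ |ρ g_f(ρ)| and M_n := sup_ρ |ρ²(f''(ρ)-g_f(ρ))| over the attainable density-ratio range are finite, then the largest eigenvalue of the Hessian ∇²_θ L̂_f^nce(θ) is at most p ψ_max² (M_d/ν + M_n), i.e., L̂_f^nce is (p ψ_max² (M_d/ν + M_n))-smooth. -/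
open RealInnerProductSpace

private theorem fNCE_smoothness_aux {X : Type*} {p : ℕ}
    (ψ : X → EuclideanSpace ℝ (Fin p))
    (ν : ℝ) (hν : 0 < ν)
    {nd nn : ℕ} (hnd : 0 < nd) (hnn : 0 < nn)
    (xd : Fin nd → X) (xn : Fin nn → X)
    (ψmax : ℝ) (hψmax : ∀ x i, |ψ x i| ≤ ψmax)
    (vd : X → ℝ) (vn : X → ℝ)
    (Md Mn : ℝ)
    (hMd : ∀ x, |vd x| ≤ Md)
    (hMn : ∀ x, |vn x| ≤ Mn)
    (u : EuclideanSpace ℝ (Fin p)) :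
    (1 / ν) * ((1 / (nd : ℝ)) * ∑ i, ⟪ψ (xd i), u⟫ ^ 2 * vd (xd i))
      + (1 / (nn : ℝ)) * ∑ i, ⟪ψ (xn i), u⟫ ^ 2 * vn (xn i)
      ≤ (p : ℝ) * ψmax ^ 2 * (Md / ν + Mn) * ‖u‖ ^ 2 := by
  have hMd0 : 0 ≤ Md := le_trans (abs_nonneg _) (hMd (xd ⟨0, hnd⟩))
  have hMn0 : 0 ≤ Mn := le_trans (abs_nonneg _) (hMn (xn ⟨0, hnn⟩))
  set C : ℝ := (p : ℝ) * ψmax ^ 2 * ‖u‖ ^ 2 with hCdef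
  have hC0 : 0 ≤ C := by positivity
  have hC : ∀ x, ⟪ψ x, u⟫ ^ 2 ≤ C := by
    intro x
    have h1 : |⟪ψ x, u⟫| ≤ ψmax * ∑ i, |u i| := by
      rw [PiLp.inner_apply]
      simp only [RCLike.inner_apply', conj_trivial]
      calc |∑ i, ψ x i * u i| ≤ ∑ i, |ψ x i * u i| := Finset.abs_sum_le_sum_abs _ _
        _ ≤ ∑ i, ψmax * |u i| := by
            refine Finset.sum_le_sum fun i _ => ?_
            rw [abs_mul]
            exact mul_le_mul_of_nonneg_right (hψmax x i) (abs_nonneg _)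
        _ = ψmax * ∑ i, |u i| := by rw [Finset.mul_sum]
    have h2 : ⟪ψ x, u⟫ ^ 2 ≤ (ψmax * ∑ i, |u i|) ^ 2 := by
      rw [← sq_abs]
      exact pow_le_pow_left₀ (abs_nonneg _) h1 2
    have h3 : (∑ i, |u i|) ^ 2 ≤ (p : ℝ) * ∑ i, |u i| ^ 2 := by
      have := sq_sum_le_card_mul_sum_sq (s := Finset.univ) (f := fun i : Fin p => |u i|)
      simpa using this
    have h4 : ‖u‖ ^ 2 = ∑ i, |u i| ^ 2 := by
      rw [EuclideanSpace.norm_eq, Real.sq_sqrt (by positivity)]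
      simp [sq_abs]
    calc ⟪ψ x, u⟫ ^ 2 ≤ (ψmax * ∑ i, |u i|) ^ 2 := h2
      _ = ψmax ^ 2 * (∑ i, |u i|) ^ 2 := by ring
      _ ≤ ψmax ^ 2 * ((p : ℝ) * ∑ i, |u i| ^ 2) :=
          mul_le_mul_of_nonneg_left h3 (sq_nonneg _)
      _ = C := by rw [hCdef, h4]; ring
  have key : ∀ (x : X) (v : X → ℝ) (M : ℝ), 0 ≤ M → (∀ y, |v y| ≤ M) →
      ⟪ψ x, u⟫ ^ 2 * v x ≤ C * M := by
    intro x v M hM0 hM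
    calc ⟪ψ x, u⟫ ^ 2 * v x ≤ ⟪ψ x, u⟫ ^ 2 * |v x| :=
          mul_le_mul_of_nonneg_left (le_abs_self _) (sq_nonneg _)
      _ ≤ C * M := mul_le_mul (hC x) (hM x) (abs_nonneg _) hC0
  have hsumd : ∑ i, ⟪ψ (xd i), u⟫ ^ 2 * vd (xd i) ≤ (nd : ℝ) * (C * Md) := by
    calc ∑ i, ⟪ψ (xd i), u⟫ ^ 2 * vd (xd i) ≤ ∑ _i : Fin nd, C * Md :=
          Finset.sum_le_sum fun i _ => key _ _ _ hMd0 hMd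
      _ = (nd : ℝ) * (C * Md) := by simp [mul_comm]
  have hsumn : ∑ i, ⟪ψ (xn i), u⟫ ^ 2 * vn (xn i) ≤ (nn : ℝ) * (C * Mn) := by
    calc ∑ i, ⟪ψ (xn i), u⟫ ^ 2 * vn (xn i) ≤ ∑ _i : Fin nn, C * Mn :=
          Finset.sum_le_sum fun i _ => key _ _ _ hMn0 hMn
      _ = (nn : ℝ) * (C * Mn) := by simp [mul_comm]
  have hd : (1 / (nd : ℝ)) * ∑ i, ⟪ψ (xd i), u⟫ ^ 2 * vd (xd i) ≤ C * Md := by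
    have hnd' : (0:ℝ) < nd := by exact_mod_cast hnd
    calc (1 / (nd : ℝ)) * ∑ i, ⟪ψ (xd i), u⟫ ^ 2 * vd (xd i)
        ≤ (1 / (nd : ℝ)) * ((nd : ℝ) * (C * Md)) :=
          mul_le_mul_of_nonneg_left hsumd (by positivity)
      _ = C * Md := by field_simp
  have hn : (1 / (nn : ℝ)) * ∑ i, ⟪ψ (xn i), u⟫ ^ 2 * vn (xn i) ≤ C * Mn := by
    have hnn' : (0:ℝ) < nn := by exact_mod_cast hnn
    calc (1 / (nn : ℝ)) * ∑ i, ⟪ψ (xn i), u⟫ ^ 2 * vn (xn i)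
        ≤ (1 / (nn : ℝ)) * ((nn : ℝ) * (C * Mn)) :=
          mul_le_mul_of_nonneg_left hsumn (by positivity)
      _ = C * Mn := by field_simp
  calc (1 / ν) * ((1 / (nd : ℝ)) * ∑ i, ⟪ψ (xd i), u⟫ ^ 2 * vd (xd i))
        + (1 / (nn : ℝ)) * ∑ i, ⟪ψ (xn i), u⟫ ^ 2 * vn (xn i)
      ≤ (1 / ν) * (C * Md) + C * Mn :=
        add_le_add (mul_le_mul_of_nonneg_left hd (by positivity)) hn
    _ = (p : ℝ) * ψmax ^ 2 * (Md / ν + Mn) * ‖u‖ ^ 2 := by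
        rw [hCdef]; field_simp


/-- Smoothness of f-NCE under bounded statistics: if `‖ψ(x)‖_∞ ≤ ψ_max` and the
quantities `M_d = sup |ρ g_f(ρ)|`, `M_n = sup |ρ²(f''(ρ)-g_f(ρ))|` over the
attainable density-ratio range are finite, then the Hessian quadratic form of
`L̂_f^nce` is bounded by `p ψ_max² (M_d/ν + M_n)`, i.e. the objective is
`(p ψ_max² (M_d/ν + M_n))`-smooth. -/
theorem fNCE_smoothness {X : Type*} {p : ℕ}
    (ψ : X → EuclideanSpace ℝ (Fin p)) (qn : X → ℝ) (hqn : ∀ x, 0 < qn x)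
    (ν : ℝ) (hν : 0 < ν)
    (f f' f'' f''' : ℝ → ℝ)
    (hf1 : ∀ ρ : ℝ, 0 < ρ → HasDerivAt f (f' ρ) ρ)
    (hf2 : ∀ ρ : ℝ, 0 < ρ → HasDerivAt f' (f'' ρ) ρ)
    (hf3 : ∀ ρ : ℝ, 0 < ρ → HasDerivAt f'' (f''' ρ) ρ)
    (gf : ℝ → ℝ) (hgf : ∀ ρ, gf ρ = -(ρ * f''' ρ + f'' ρ))
    -- empirical samples
    {nd nn : ℕ} (hnd : 0 < nd) (hnn : 0 < nn)
    (xd : Fin nd → X) (xn : Fin nn → X)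
    -- the density-ratio model
    (ρmod : EuclideanSpace ℝ (Fin p) → X → ℝ)
    (hρ : ∀ θ x, ρmod θ x = Real.exp ⟪θ, ψ x⟫ / (ν * qn x))
    -- bounded statistics (maximum norm)
    (ψmax : ℝ) (hψmax : ∀ x i, |ψ x i| ≤ ψmax)
    -- uniform bounds over the attainable density-ratio range
    (Md Mn : ℝ)
    (hMd : ∀ θ x, |ρmod θ x * gf (ρmod θ x)| ≤ Md)
    (hMn : ∀ θ x, |(ρmod θ x) ^ 2 * (f'' (ρmod θ x) - gf (ρmod θ x))| ≤ Mn)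
    -- the Hessian quadratic form of the empirical objective
    (Hquad : EuclideanSpace ℝ (Fin p) → EuclideanSpace ℝ (Fin p) → ℝ)
    (hHquad : ∀ θ u, Hquad θ u =
      (1 / ν) * ((1 / (nd : ℝ)) *
          ∑ i, ⟪ψ (xd i), u⟫ ^ 2 * (ρmod θ (xd i) * gf (ρmod θ (xd i))))
      + (1 / (nn : ℝ)) *
          ∑ i, ⟪ψ (xn i), u⟫ ^ 2 *
            ((ρmod θ (xn i)) ^ 2 * (f'' (ρmod θ (xn i)) - gf (ρmod θ (xn i))))) :
    ∀ θ u, Hquad θ u ≤ (p : ℝ) * ψmax ^ 2 * (Md / ν + Mn) * ‖u‖ ^ 2 := by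
  intro θ u
  rw [hHquad]
  exact fNCE_smoothness_aux ψ ν hν hnd hnn xd xn ψmax hψmax
    (fun x => ρmod θ x * gf (ρmod θ x))
    (fun x => (ρmod θ x) ^ 2 * (f'' (ρmod θ x) - gf (ρmod θ x)))
    Md Mn (hMd θ) (hMn θ) u
end
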